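/- arXiv:1712.02485 — 7 statements merged into one kernel-verified Lean document; each statement's English description precedes it below -/
import Mathlib

section
/- Consider the continuous-time mirror descent dynamics ż^(t) = −α̇^(t) ∇f(x^(t)), x^(t) = ∇φ*(z^(t)), d/dt x̂^(t) = α̇^(t)(x^(t) − x̂^(t))/α^(t), with z^(0) = 0 and x̂^(0) = x^(0) ∈ X. Then for all t > 0, f(x̂^(t)) − f(x*) ≤ [α^(0)(f(x^(0)) − f(x*)) + φ(x*)] / α^(t). -/
/-!
Lyapunov argument. Let `ℓ` be the affine minorant of `f - f x*` at the final average `x̂(T)`.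
The energy `E(t) = α(t) ℓ(x̂(t)) + φ*(z(t)) - ⟪z(t), x*⟫` is nonincreasing: `(α ℓ(x̂))' = α' ℓ(x)`
along the averaging flow, while `x = ∇φ*(z)` is a subgradient of `φ*`, so the conjugate term
grows at most like `⟪z', x - x*⟫ = -α' ⟪∇f(x), x - x*⟫ ≤ -α' (f(x) - f(x*)) ≤ -α' ℓ(x)`.
Since `φ*` need not be differentiable, monotonicity is derived from one-sided increment bounds.
Then `E(T) ≥ α(T) (f(x̂(T)) - f(x*)) - φ(x*)` by Fenchel–Young and
`E(0) ≤ α(0) (f(x(0)) - f(x*))` because `φ*(0) = -min φ ≤ 0`.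
Convexity of `f` may be applied at `x̂(T)` because `x̂` stays in `X`: it always moves towards a
point of `X`, so its distance to `X` never increases.
-/

open scoped RealInnerProductSpace
open Set Filter Topology Metric

theorem image_le_of_eventually_sub_le_right {f : ℝ → ℝ} {a b : ℝ} (hab : a ≤ b)
    (hf : ContinuousOn f (Icc a b))
    (h : ∀ s ∈ Ico a b, ∀ ε > 0, ∀ᶠ u in 𝓝[>] s, f u - f s ≤ ε * (u - s)) :
    f b ≤ f a := by
  refine image_le_of_liminf_slope_right_le_deriv_boundary (B := fun _ => f a) hf le_rfl
    continuousOn_const (fun s _ => hasDerivWithinAt_const s _ (f a)) (fun s hs r hr => ?_)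
    (right_mem_Icc.2 hab)
  have hslope : ∀ᶠ u in 𝓝[>] s, slope f s u < r := by
    filter_upwards [h s hs (r / 2) (half_pos hr), self_mem_nhdsWithin] with u hu (hsu : s < u)
    rw [slope_def_field, div_lt_iff₀ (sub_pos.2 hsu)]
    nlinarith [sub_pos.2 hsu]
  exact hslope.frequently

theorem image_le_of_eventually_sub_le_left {f : ℝ → ℝ} {a b : ℝ} (hab : a ≤ b)
    (hf : ContinuousOn f (Icc a b))
    (h : ∀ s ∈ Ioc a b, ∀ ε > 0, ∀ᶠ u in 𝓝[<] s, f s - f u ≤ ε * (s - u)) :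
    f b ≤ f a := by
  have hrefl := image_le_of_eventually_sub_le_right (f := fun v => -f (-v)) (neg_le_neg hab)
    (hf.comp continuousOn_neg (fun v hv => ⟨by linarith [hv.2], by linarith [hv.1]⟩)).neg
    (fun s hs ε hε => ?_)
  · simpa using hrefl
  · have hs' : -s ∈ Ioc a b := ⟨by linarith [hs.2], by linarith [hs.1]⟩
    filter_upwards [tendsto_neg_nhdsGT.eventually (h (-s) hs' ε hε)] with u hu
    linarith

theorem HasDerivAt.eventually_sub_le_left {W : ℝ → ℝ} {d s ε : ℝ} (hW : HasDerivAt W d s)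
    (hd : d ≤ 0) (hε : 0 < ε) : ∀ᶠ u in 𝓝[<] s, W s - W u ≤ ε * (s - u) := by
  have hslope : ∀ᶠ u in 𝓝[<] s, slope W s u < ε :=
    ((hasDerivAt_iff_tendsto_slope.1 hW).mono_left (nhdsLT_le_nhdsNE s)).eventually
      (eventually_lt_nhds (by linarith))
  filter_upwards [hslope, self_mem_nhdsWithin] with u hu (hus : u < s)
  rw [slope_def_field, div_lt_iff_of_neg (sub_neg.2 hus)] at hu
  linarith

section Invariance

variable {E : Type*} [NormedAddCommGroup E] [NormedSpace ℝ E] [ProperSpace E]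

theorem eventually_infDist_sub_le {X : Set E} (hXcl : IsClosed X) (hXcvx : Convex ℝ X)
    {y : ℝ → E} {v : E} {β s ε : ℝ} (hβ : 0 ≤ β) (hv : v ∈ X)
    (hy : HasDerivAt y (β • (v - y s)) s) (hε : 0 < ε) :
    ∀ᶠ u in 𝓝[>] s, infDist (y u) X - infDist (y s) X ≤ ε * (u - s) := by
  obtain ⟨p, hpX, hp⟩ := hXcl.exists_infDist_eq_dist ⟨v, hv⟩ (y s)
  have hsmall : Ioo s (s + 1 / (β + 1)) ∈ 𝓝[>] s :=
    Ioo_mem_nhdsGT (lt_add_of_pos_right s (by positivity))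
  filter_upwards [(hasDerivAt_iff_isLittleO.1 hy).def hε |>.filter_mono nhdsWithin_le_nhds,
    hsmall] with u hu ⟨hsu, hus⟩
  set k := (u - s) * β
  have hk0 : 0 ≤ k := mul_nonneg (sub_pos.2 hsu).le hβ
  have hk1 : k ≤ 1 := by
    have : (u - s) * (β + 1) < 1 := by
      rw [← lt_div_iff₀ (by positivity)]; linarith
    nlinarith [sub_pos.2 hsu]
  -- the convex combination `(1 - k) p + k v` approximates `y u` to first order
  have hqX : (1 - k) • p + k • v ∈ X := hXcvx hpX hv (by linarith) hk0 (by ring)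
  have hsplit : y u - ((1 - k) • p + k • v)
      = (y u - y s - (u - s) • (β • (v - y s))) + (1 - k) • (y s - p) := by
    simp only [k]; module
  rw [sub_le_iff_le_add]
  calc infDist (y u) X ≤ ‖y u - ((1 - k) • p + k • v)‖ := by
        rw [← dist_eq_norm]; exact infDist_le_dist_of_mem hqX
    _ ≤ ε * ‖u - s‖ + (1 - k) * infDist (y s) X := by
        rw [hsplit, hp, dist_eq_norm]
        refine (norm_add_le _ _).trans (add_le_add hu ?_)
        rw [norm_smul, Real.norm_of_nonneg (by linarith)]
    _ ≤ ε * (u - s) + infDist (y s) X := by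
        rw [Real.norm_of_nonneg (sub_pos.2 hsu).le]
        nlinarith [infDist_nonneg (x := y s) (s := X)]

theorem mem_of_hasDerivAt_smul_sub {X : Set E} (hXcl : IsClosed X) (hXcvx : Convex ℝ X)
    {x y : ℝ → E} {β : ℝ → ℝ} (hβ : ∀ t, 0 ≤ β t) (hxX : ∀ t, x t ∈ X)
    (hy : ∀ t, HasDerivAt y (β t • (x t - y t)) t) {a b : ℝ} (hab : a ≤ b) (ha : y a ∈ X) :
    y b ∈ X := by
  have hyc : Continuous y := continuous_iff_continuousAt.2 fun t => (hy t).continuousAt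
  have hdist : infDist (y b) X ≤ infDist (y a) X :=
    image_le_of_eventually_sub_le_right hab
      ((continuous_infDist_pt X).comp hyc).continuousOn
      fun s _ ε hε => eventually_infDist_sub_le hXcl hXcvx (hβ s) (hxX s) (hy s) hε
  rw [infDist_zero_of_mem ha] at hdist
  exact (hXcl.mem_iff_infDist_zero ⟨x a, hxX a⟩).2 (le_antisymm hdist infDist_nonneg)

end Invariance

section Conjugate

variable {E : Type*} [NormedAddCommGroup E] [InnerProductSpace ℝ E] {X : Set E} {φ : E → ℝ}
  {m : E → E}

/-- The convex conjugate `φ*(w) = max_{p ∈ X} (⟪w, p⟫ - φ p)`, evaluated at the maximizer `m w`. -/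
def conjugateVia (φ : E → ℝ) (m : E → E) (w : E) : ℝ := ⟪w, m w⟫ - φ (m w)

theorem inner_sub_le_conjugateVia (hmmax : ∀ w, IsMaxOn (fun p => ⟪w, p⟫ - φ p) X (m w))
    (w : E) {p : E} (hp : p ∈ X) : ⟪w, p⟫ - φ p ≤ conjugateVia φ m w :=
  isMaxOn_iff.1 (hmmax w) p hp

theorem conjugateVia_add_inner_le (hmX : ∀ w, m w ∈ X)
    (hmmax : ∀ w, IsMaxOn (fun p => ⟪w, p⟫ - φ p) X (m w)) (w w' : E) :
    conjugateVia φ m w + ⟪w' - w, m w⟫ ≤ conjugateVia φ m w' := by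
  have h := inner_sub_le_conjugateVia hmmax w' (hmX w)
  rw [conjugateVia, inner_sub_left]
  linarith

theorem convexOn_conjugateVia (hmX : ∀ w, m w ∈ X)
    (hmmax : ∀ w, IsMaxOn (fun p => ⟪w, p⟫ - φ p) X (m w)) :
    ConvexOn ℝ univ (conjugateVia φ m) := by
  refine ⟨convex_univ, fun w₁ _ w₂ _ a b ha hb hab => ?_⟩
  obtain rfl : b = 1 - a := by linarith
  set w := a • w₁ + (1 - a) • w₂
  have h₁ := conjugateVia_add_inner_le hmX hmmax w w₁
  have h₂ := conjugateVia_add_inner_le hmX hmmax w w₂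
  have hw : a * ⟪w₁ - w, m w⟫ + (1 - a) * ⟪w₂ - w, m w⟫ = 0 := by
    rw [← real_inner_smul_left, ← real_inner_smul_left, ← inner_add_left]
    convert inner_zero_left (m w) using 2
    simp only [w]
    module
  simp only [smul_eq_mul]
  nlinarith [mul_le_mul_of_nonneg_left h₁ ha, mul_le_mul_of_nonneg_left h₂ hb]

theorem continuous_conjugateVia [FiniteDimensional ℝ E] (hmX : ∀ w, m w ∈ X)
    (hmmax : ∀ w, IsMaxOn (fun p => ⟪w, p⟫ - φ p) X (m w)) :
    Continuous (conjugateVia φ m) :=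
  continuousOn_univ.1 ((convexOn_conjugateVia hmX hmmax).continuousOn isOpen_univ)

end Conjugate

section MirrorDescent

variable {E : Type*} [NormedAddCommGroup E] [InnerProductSpace ℝ E]

theorem HasDerivAt.mul_affine_of_average {α : ℝ → ℝ} {α' s c : ℝ} {x g : E} {y : ℝ → E}
    (hα : HasDerivAt α α' s) (hα0 : α s ≠ 0) (hy : HasDerivAt y ((α' / α s) • (x - y s)) s) :
    HasDerivAt (fun t => α t * (c + ⟪g, y t⟫)) (α' * (c + ⟪g, x⟫)) s := by
  refine (hα.mul (((hasDerivAt_const s g).inner ℝ hy).const_add c)).congr_deriv ?_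
  simp only [inner_zero_left, add_zero, real_inner_smul_right, inner_sub_right]
  field_simp
  ring

variable [FiniteDimensional ℝ E] {X : Set E} {φ : E → ℝ} {m : E → E}

theorem mirrorDescent_energy_le (hmX : ∀ w, m w ∈ X)
    (hmmax : ∀ w, IsMaxOn (fun p => ⟪w, p⟫ - φ p) X (m w))
    {α : ℝ → ℝ} (hα : Differentiable ℝ α) (hα0 : ∀ t, α t ≠ 0) {v z x y : ℝ → E}
    (hz : ∀ t, HasDerivAt z (-(deriv α t) • v t) t) (hx : ∀ t, x t = m (z t))
    (hy : ∀ t, HasDerivAt y ((deriv α t / α t) • (x t - y t)) t) {c : ℝ} {g p : E}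
    (hdiss : ∀ t, deriv α t * (c + ⟪g, x t⟫) ≤ deriv α t * ⟪v t, x t - p⟫) {a b : ℝ}
    (hab : a ≤ b) :
    α b * (c + ⟪g, y b⟫) + (conjugateVia φ m (z b) - ⟪z b, p⟫)
      ≤ α a * (c + ⟪g, y a⟫) + (conjugateVia φ m (z a) - ⟪z a, p⟫) := by
  have hzc : Continuous z := continuous_iff_continuousAt.2 fun t => (hz t).continuousAt
  have hyc : Continuous y := continuous_iff_continuousAt.2 fun t => (hy t).continuousAt
  have hαc := hα.continuous
  have hconjc := continuous_conjugateVia hmX hmmax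
  refine image_le_of_eventually_sub_le_left
    (f := fun t => α t * (c + ⟪g, y t⟫) + (conjugateVia φ m (z t) - ⟪z t, p⟫)) hab
    (Continuous.continuousOn (by fun_prop)) fun s _ ε hε => ?_
  -- `x s = m (z s)` is a subgradient of `φ*` at `z s`, so the backward increments of the energy
  -- are bounded by those of the differentiable function below
  have hW : HasDerivAt (fun t => α t * (c + ⟪g, y t⟫) + ⟪z t, x s - p⟫)
      (deriv α s * (c + ⟪g, x s⟫) + ⟪-(deriv α s) • v s, x s - p⟫) s :=
    (hα s).hasDerivAt.mul_affine_of_average (hα0 s) (hy s) |>.add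
      ((hz s).inner ℝ (hasDerivAt_const s _) |>.congr_deriv (by simp))
  have hW0 : deriv α s * (c + ⟪g, x s⟫) + ⟪-(deriv α s) • v s, x s - p⟫ ≤ 0 := by
    rw [real_inner_smul_left]
    linarith [hdiss s]
  filter_upwards [hW.eventually_sub_le_left hW0 hε] with u hu
  have hsub := conjugateVia_add_inner_le hmX hmmax (z s) (z u)
  rw [← hx s] at hsub
  simp only [inner_sub_left, inner_sub_right] at hu hsub ⊢
  linarith

end MirrorDescent

theorem stmt4_general {n : ℕ} (X : Set (EuclideanSpace ℝ (Fin n)))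
    (hXcl : IsClosed X) (hXcvx : Convex ℝ X)
    (f : EuclideanSpace ℝ (Fin n) → ℝ)
    (gf : EuclideanSpace ℝ (Fin n) → EuclideanSpace ℝ (Fin n))
    (hconv : ∀ p ∈ X, ∀ q ∈ X, f q ≥ f p + ⟪gf p, q - p⟫)
    (xstar : EuclideanSpace ℝ (Fin n)) (hxstarX : xstar ∈ X)
    (α : ℝ → ℝ) (hαdiff : Differentiable ℝ α)
    (hαpos : ∀ t, 0 < α t) (hαinc : ∀ t, 0 < deriv α t)
    (φ : EuclideanSpace ℝ (Fin n) → ℝ)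
    (hφnonneg : ∀ y ∈ X, 0 ≤ φ y)
    (m : EuclideanSpace ℝ (Fin n) → EuclideanSpace ℝ (Fin n))
    (hmX : ∀ z, m z ∈ X)
    (hmmax : ∀ z, IsMaxOn (fun p => ⟪z, p⟫ - φ p) X (m z))
    (z x xh : ℝ → EuclideanSpace ℝ (Fin n))
    (hz : ∀ t, HasDerivAt z (-(deriv α t) • gf (x t)) t)
    (hx : ∀ t, x t = m (z t))
    (hxh : ∀ t, HasDerivAt xh ((deriv α t / α t) • (x t - xh t)) t)
    (hz0 : z 0 = 0) (hxh0 : xh 0 = x 0) :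
    ∀ t > (0 : ℝ),
      f (xh t) - f xstar ≤ (α 0 * (f (x 0) - f xstar) + φ xstar) / α t := by
  intro T hT
  have hxX : ∀ t, x t ∈ X := fun t => hx t ▸ hmX (z t)
  have hxhT : xh T ∈ X := mem_of_hasDerivAt_smul_sub hXcl hXcvx
    (fun t => (div_pos (hαinc t) (hαpos t)).le) hxX hxh hT.le (hxh0 ▸ hxX 0)
  set g := gf (xh T)
  set c := f (xh T) - f xstar - ⟪g, xh T⟫
  have hminor : ∀ q ∈ X, c + ⟪g, q⟫ ≤ f q - f xstar := fun q hq => by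
    linarith [hconv _ hxhT q hq, inner_sub_right (𝕜 := ℝ) g q (xh T)]
  have hdiss : ∀ t, deriv α t * (c + ⟪g, x t⟫) ≤ deriv α t * ⟪gf (x t), x t - xstar⟫ := by
    intro t
    refine mul_le_mul_of_nonneg_left ((hminor _ (hxX t)).trans ?_) (hαinc t).le
    linarith [hconv _ (hxX t) _ hxstarX, inner_sub_right (𝕜 := ℝ) (gf (x t)) (x t) xstar,
      inner_sub_right (𝕜 := ℝ) (gf (x t)) xstar (x t)]
  have henergy := mirrorDescent_energy_le hmX hmmax hαdiff (fun t => (hαpos t).ne') hz hx hxh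
    hdiss hT.le
  have hT_conj := inner_sub_le_conjugateVia hmmax (z T) hxstarX
  have h0_conj : conjugateVia φ m 0 ≤ 0 := by
    simpa [conjugateVia] using hφnonneg _ (hmX 0)
  have hcT : c + ⟪g, xh T⟫ = f (xh T) - f xstar := sub_add_cancel _ _
  rw [hz0, hxh0, inner_zero_left, sub_zero, hcT] at henergy
  rw [le_div_iff₀ (hαpos T), mul_comm]
  linarith [mul_le_mul_of_nonneg_left (hminor _ (hxX 0)) (hαpos 0).le]

/-- Convergence of continuous-time mirror descent (CT-MD):
`f(x̂^(t)) − f(x*) ≤ (α^(0)(f(x^(0)) − f(x*)) + φ(x*)) / α^(t)`. -/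
theorem stmt4 {n : ℕ} (X : Set (EuclideanSpace ℝ (Fin n)))
    (hXcl : IsClosed X) (hXcvx : Convex ℝ X)
    (f : EuclideanSpace ℝ (Fin n) → ℝ)
    (gf : EuclideanSpace ℝ (Fin n) → EuclideanSpace ℝ (Fin n))
    (hconv : ∀ p ∈ X, ∀ q ∈ X, f q ≥ f p + ⟪gf p, q - p⟫)
    (xstar : EuclideanSpace ℝ (Fin n)) (hxstarX : xstar ∈ X)
    (hxstarmin : ∀ y ∈ X, f xstar ≤ f y)
    (α : ℝ → ℝ) (hαdiff : Differentiable ℝ α)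
    (hαpos : ∀ t, 0 < α t) (hαinc : ∀ t, 0 < deriv α t)
    (φ : EuclideanSpace ℝ (Fin n) → ℝ)
    (hφsc : StrictConvexOn ℝ X φ) (hφnonneg : ∀ y ∈ X, 0 ≤ φ y)
    (m : EuclideanSpace ℝ (Fin n) → EuclideanSpace ℝ (Fin n))
    (hmX : ∀ z, m z ∈ X)
    (hmmax : ∀ z, IsMaxOn (fun p => ⟪z, p⟫ - φ p) X (m z))
    (z x xh : ℝ → EuclideanSpace ℝ (Fin n))
    (hz : ∀ t, HasDerivAt z (-(deriv α t) • gf (x t)) t)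
    (hx : ∀ t, x t = m (z t))
    (hxh : ∀ t, HasDerivAt xh ((deriv α t / α t) • (x t - xh t)) t)
    (hz0 : z 0 = 0) (hxh0 : xh 0 = x 0) :
    ∀ t > (0 : ℝ),
      f (xh t) - f xstar ≤ (α 0 * (f (x 0) - f xstar) + φ xstar) / α t :=
  stmt4_general X hXcl hXcvx f gf hconv xstar hxstarX α hαdiff hαpos hαinc φ hφnonneg m hmX hmmax z
    x xh hz hx hxh hz0 hxh0
end

section
/- Consider the continuous-time accelerated mirror descent dynamics ż^(t) = −α̇^(t) ∇f(x^(t)), ẋ^(t) = α̇^(t)(∇φ*(z^(t)) − x^(t))/α^(t), with z^(0) = 0 and x^(0) ∈ X. Then for all t > 0, f(x^(t)) − f(x*) ≤ [α^(0)(f(x^(0)) − f(x*)) + φ(x*)] / α^(t). -/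
/-!
The iterate `x` never leaves `X`: its velocity points from `x` towards `m (z) ∈ X`, so the distance
to the closed convex set `X` cannot grow. Along the trajectory the energy
`α (f (x) - f x⋆) + φ*(z) - ⟪z, x⋆⟫` is non-increasing. The conjugate `φ*` need not be
differentiable, but `m (z u)` is a subgradient of `φ*` at `z u`, so at every time `u` the energy is
dominated from the left by the function obtained by linearising `φ*` at `z u`; that function has
derivative `α' (f (x) - f x⋆ + ⟪∇f (x), x⋆ - x⟫) ≤ 0` at `u` by convexity of `f`. Comparing the
energy at `t` and at `0`, using `φ*(z t) - ⟪z t, x⋆⟫ ≥ -φ x⋆` and `φ*(0) ≤ 0`, gives the bound.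
-/

open Metric Set Filter
open scoped RealInnerProductSpace Topology

theorem le_of_frequently_slope_left_lt {g : ℝ → ℝ} {a b : ℝ} (hab : a ≤ b)
    (hg : ContinuousOn g (Icc a b))
    (H : ∀ u ∈ Ioc a b, ∀ r > 0, ∃ᶠ w in 𝓝[<] u, slope g w u < r) : g b ≤ g a := by
  have hrev : ∀ σ ∈ Icc (-b) (-a), -g (-σ) ≤ -g b :=
    image_le_of_liminf_slope_right_le_deriv_boundary (f := fun σ => -g (-σ)) (B := fun _ => -g b)
      (B' := fun _ => 0) ?_ (by rw [neg_neg]) continuousOn_const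
      (fun σ _ => hasDerivWithinAt_const σ _ _) ?_
  · simpa using hrev (-a) ⟨neg_le_neg hab, le_rfl⟩
  · refine (hg.comp continuousOn_neg fun σ hσ => ?_).neg
    exact ⟨le_neg.mpr hσ.2, neg_le.mpr hσ.1⟩
  · intro σ hσ r hr
    have hslope : ∀ w, slope g w (-σ) = slope (fun σ => -g (-σ)) σ (-w) := by
      intro w
      simp only [slope_def_field, neg_neg]
      ring
    refine tendsto_neg_nhdsLT_neg.frequently ?_
    simpa only [hslope] using H (-σ) ⟨lt_neg.mpr hσ.2, neg_le.mpr hσ.1⟩ r hr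

theorem eventually_slope_left_lt_of_hasDerivWithinAt {g D : ℝ → ℝ} {u γ r : ℝ}
    (hD : HasDerivWithinAt D γ (Iio u) u) (hγr : γ < r)
    (hgD : ∀ w < u, g u - g w ≤ D u - D w) : ∀ᶠ w in 𝓝[<] u, slope g w u < r := by
  have hslope := (hasDerivWithinAt_iff_tendsto_slope' self_notMem_Iio).mp hD
  filter_upwards [hslope.eventually_lt_const hγr, self_mem_nhdsWithin] with w hw (hwu : w < u)
  rw [slope_comm] at hw
  calc slope g w u = (g u - g w) / (u - w) := slope_def_field _ _ _
    _ ≤ (D u - D w) / (u - w) := div_le_div_of_nonneg_right (hgD w hwu) (sub_pos.2 hwu).le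
    _ = slope D w u := (slope_def_field _ _ _).symm
    _ < r := hw

section Invariance

variable {E : Type*} [NormedAddCommGroup E] [NormedSpace ℝ E] [ProperSpace E] {X : Set E}

theorem eventually_slope_infDist_lt_of_hasDerivAt_smul_sub (hXc : IsClosed X)
    (hXv : Convex ℝ X) {x : ℝ → E} {σ c : ℝ} {v : E} (hx : HasDerivAt x (c • (v - x σ)) σ)
    (hc : 0 ≤ c) (hv : v ∈ X) {r : ℝ} (hr : 0 < r) :
    ∀ᶠ s in 𝓝[>] σ, slope (fun t => infDist (x t) X) σ s < r := by
  obtain ⟨p, hpX, hp⟩ := hXc.exists_infDist_eq_dist ⟨v, hv⟩ (x σ)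
  have hlin : ∀ᶠ s in 𝓝[>] σ, ‖x s - x σ - (s - σ) • c • (v - x σ)‖ ≤ r / 2 * ‖s - σ‖ :=
    nhdsWithin_le_nhds ((hasDerivAt_iff_isLittleO.mp hx).def (half_pos hr))
  have hsmall : ∀ᶠ s in 𝓝[>] σ, (s - σ) * c < 1 := by
    have hθ₀ : Tendsto (fun s => (s - σ) * c) (𝓝 σ) (𝓝 0) := by
      simpa using ((tendsto_id (x := 𝓝 σ)).sub_const σ).mul_const c
    exact nhdsWithin_le_nhds (hθ₀.eventually_lt_const one_pos)
  filter_upwards [hlin, hsmall, self_mem_nhdsWithin] with s hlin hsmall (hσs : σ < s)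
  have hds : 0 < s - σ := sub_pos.2 hσs
  set θ := (s - σ) * c
  have hθ : 0 ≤ θ := mul_nonneg hds.le hc
  -- `x s` is `o(s - σ)`-close to `x σ + θ • (v - x σ)`, which is `(1 - θ) * dist (x σ) p`-close
  -- to the point `(1 - θ) • p + θ • v` of `X`, `p` being a nearest point of `X` to `x σ`.
  have hq : (1 - θ) • p + θ • v ∈ X := hXv hpX hv (by linarith) hθ (by ring)
  rw [smul_smul, Real.norm_of_nonneg hds.le] at hlin
  have hsplit :
      x s - ((1 - θ) • p + θ • v) = (x s - x σ - θ • (v - x σ)) + (1 - θ) • (x σ - p) := by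
    module
  have hdist : infDist (x s) X ≤ r / 2 * (s - σ) + infDist (x σ) X :=
    calc infDist (x s) X ≤ dist (x s) ((1 - θ) • p + θ • v) := infDist_le_dist_of_mem hq
      _ ≤ r / 2 * (s - σ) + (1 - θ) * dist (x σ) p := by
        rw [dist_eq_norm, hsplit, dist_eq_norm (x σ) p]
        refine (norm_add_le _ _).trans ?_
        rw [norm_smul, Real.norm_of_nonneg (by linarith)]
        linarith
      _ ≤ r / 2 * (s - σ) + infDist (x σ) X := by
        rw [hp]; nlinarith [dist_nonneg (x := x σ) (y := p)]
  rw [slope_def_field, div_lt_iff₀ hds]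
  nlinarith

theorem Convex.mem_of_hasDerivAt_smul_sub (hXv : Convex ℝ X) (hXc : IsClosed X)
    {x y : ℝ → E} {c : ℝ → ℝ} (hx : ∀ t, HasDerivAt x (c t • (y t - x t)) t)
    (hc : ∀ t, 0 ≤ c t) (hy : ∀ t, y t ∈ X) (hx₀ : x 0 ∈ X) {T : ℝ} (hT : 0 ≤ T) : x T ∈ X := by
  have hxc : Continuous x := continuous_iff_continuousAt.2 fun t => (hx t).continuousAt
  have hdist : ∀ t ∈ Icc 0 T, infDist (x t) X ≤ 0 :=
    image_le_of_liminf_slope_right_le_deriv_boundary (B := fun _ => 0) (B' := fun _ => 0)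
      ((continuous_infDist_pt X).comp hxc).continuousOn (infDist_zero_of_mem hx₀).le
      continuousOn_const (fun t _ => hasDerivWithinAt_const t _ _)
      fun t _ r hr => (eventually_slope_infDist_lt_of_hasDerivAt_smul_sub hXc hXv (hx t) (hc t)
        (hy t) hr).frequently
  exact (hXc.mem_iff_infDist_zero ⟨x 0, hx₀⟩).2
    (le_antisymm (hdist T ⟨hT, le_rfl⟩) infDist_nonneg)

end Invariance

section Conjugate

variable {E : Type*} [NormedAddCommGroup E] [InnerProductSpace ℝ E] {X : Set E}
  {φ : E → ℝ} {m : E → E}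

/-- The convex conjugate `φ*(v) = sup_{p ∈ X} (⟪v, p⟫ - φ p)`, evaluated at a maximiser `m v`. -/
def conjugateAt (φ : E → ℝ) (m : E → E) (v : E) : ℝ := ⟪v, m v⟫ - φ (m v)

theorem inner_sub_le_conjugateAt {v p : E} (hm : IsMaxOn (fun p => ⟪v, p⟫ - φ p) X (m v))
    (hp : p ∈ X) : ⟪v, p⟫ - φ p ≤ conjugateAt φ m v :=
  hm hp

theorem conjugateAt_sub_le {v w : E} (hm : IsMaxOn (fun p => ⟪w, p⟫ - φ p) X (m w))
    (hv : m v ∈ X) : conjugateAt φ m v - conjugateAt φ m w ≤ ⟪m v, v - w⟫ := by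
  have := inner_sub_le_conjugateAt hm hv
  rw [conjugateAt, inner_sub_right, real_inner_comm v, real_inner_comm w]
  linarith

theorem convexOn_conjugateAt (hm : ∀ v, IsMaxOn (fun p => ⟪v, p⟫ - φ p) X (m v))
    (hmX : ∀ v, m v ∈ X) : ConvexOn ℝ univ (conjugateAt φ m) := by
  refine ⟨convex_univ, fun v _ w _ a b ha hb hab => ?_⟩
  set p := m (a • v + b • w)
  have hv := inner_sub_le_conjugateAt (hm v) (hmX (a • v + b • w))
  have hw := inner_sub_le_conjugateAt (hm w) (hmX (a • v + b • w))
  calc conjugateAt φ m (a • v + b • w) = a * (⟪v, p⟫ - φ p) + b * (⟪w, p⟫ - φ p) := by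
        rw [conjugateAt, inner_add_left, real_inner_smul_left, real_inner_smul_left]
        linear_combination φ p * hab
    _ ≤ a • conjugateAt φ m v + b • conjugateAt φ m w := by
        simp only [smul_eq_mul]; gcongr

theorem continuous_conjugateAt [FiniteDimensional ℝ E]
    (hm : ∀ v, IsMaxOn (fun p => ⟪v, p⟫ - φ p) X (m v)) (hmX : ∀ v, m v ∈ X) :
    Continuous (conjugateAt φ m) :=
  continuousOn_univ.1 ((convexOn_conjugateAt hm hmX).continuousOn isOpen_univ)

end Conjugate

section Lyapunov

variable {E : Type*} [NormedAddCommGroup E] [InnerProductSpace ℝ E]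

/-- Lyapunov function of accelerated mirror descent; `ψ` stands for `φ*`. -/
def amdEnergy (α : ℝ → ℝ) (f ψ : E → ℝ) (x z : ℝ → E) (xstar : E) (t : ℝ) : ℝ :=
  α t * (f (x t) - f xstar) + ψ (z t) - ⟪z t, xstar⟫

theorem hasDerivAt_linearizedAmdEnergy [CompleteSpace E] {α : ℝ → ℝ} {f : E → ℝ} {x z : ℝ → E}
    {u α' c : ℝ} {g y p : E}
    (hα : HasDerivAt α α' u) (hαu : α u ≠ 0) (hf : HasGradientAt f g (x u))
    (hz : HasDerivAt z (-α' • g) u) (hx : HasDerivAt x ((α' / α u) • (y - x u)) u) :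
    HasDerivAt (fun s => α s * (f (x s) - c) + ⟪z s, y - p⟫)
      (α' * (f (x u) - c + ⟪g, p - x u⟫)) u := by
  have hfx := hf.hasFDerivAt.comp_hasDerivAt u hx
  rw [InnerProductSpace.toDual_apply_apply] at hfx
  refine ((hα.mul (hfx.sub_const c)).add (hz.inner ℝ (hasDerivAt_const u (y - p)))).congr_deriv ?_
  simp only [Function.comp_apply, real_inner_smul_left, real_inner_smul_right, inner_zero_right,
    inner_sub_right]
  field_simp
  ring

theorem amdEnergy_sub_le {X : Set E} {α : ℝ → ℝ} {f φ : E → ℝ} {m : E → E} {x z : ℝ → E}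
    {xstar : E} {u w : ℝ} (hm : IsMaxOn (fun p => ⟪z w, p⟫ - φ p) X (m (z w)))
    (hmX : m (z u) ∈ X) :
    amdEnergy α f (conjugateAt φ m) x z xstar u - amdEnergy α f (conjugateAt φ m) x z xstar w ≤
      (α u * (f (x u) - f xstar) + ⟪z u, m (z u) - xstar⟫) -
        (α w * (f (x w) - f xstar) + ⟪z w, m (z u) - xstar⟫) := by
  have := conjugateAt_sub_le hm hmX
  simp only [amdEnergy, inner_sub_right, real_inner_comm (m (z u))] at *
  linarith

theorem amdEnergy_le_amdEnergy_zero [FiniteDimensional ℝ E] {X : Set E} {α : ℝ → ℝ}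
    {f φ : E → ℝ} {gf m : E → E} {x z : ℝ → E} {xstar : E}
    (hgrad : ∀ p, HasGradientAt f (gf p) p)
    (hconv : ∀ p ∈ X, ∀ q ∈ X, f q ≥ f p + ⟪gf p, q - p⟫) (hxstar : xstar ∈ X)
    (hαdiff : Differentiable ℝ α) (hαne : ∀ t, α t ≠ 0) (hαmono : ∀ t, 0 ≤ deriv α t)
    (hm : ∀ v, IsMaxOn (fun p => ⟪v, p⟫ - φ p) X (m v)) (hmX : ∀ v, m v ∈ X)
    (hz : ∀ t, HasDerivAt z (-(deriv α t) • gf (x t)) t)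
    (hx : ∀ t, HasDerivAt x ((deriv α t / α t) • (m (z t) - x t)) t)
    (hxX : ∀ t, 0 ≤ t → x t ∈ X) {T : ℝ} (hT : 0 ≤ T) :
    amdEnergy α f (conjugateAt φ m) x z xstar T ≤ amdEnergy α f (conjugateAt φ m) x z xstar 0 := by
  have hcont : Continuous (amdEnergy α f (conjugateAt φ m) x z xstar) := by
    have hxc : Continuous x := continuous_iff_continuousAt.2 fun t => (hx t).continuousAt
    have hzc : Continuous z := continuous_iff_continuousAt.2 fun t => (hz t).continuousAt
    have hfc : Continuous f :=
      continuous_iff_continuousAt.2 fun p => (hgrad p).hasFDerivAt.continuousAt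
    have hψc := continuous_conjugateAt hm hmX
    have hαc := hαdiff.continuous
    unfold amdEnergy
    fun_prop
  refine le_of_frequently_slope_left_lt hT hcont.continuousOn fun u hu r hr => ?_
  have hγ : deriv α u * (f (x u) - f xstar + ⟪gf (x u), xstar - x u⟫) ≤ 0 :=
    mul_nonpos_of_nonneg_of_nonpos (hαmono u)
      (by linarith [hconv _ (hxX u hu.1.le) _ hxstar])
  have hD := hasDerivAt_linearizedAmdEnergy (c := f xstar) (p := xstar) (hαdiff u).hasDerivAt
    (hαne u) (hgrad (x u)) (hz u) (hx u)
  exact (eventually_slope_left_lt_of_hasDerivWithinAt hD.hasDerivWithinAt (hγ.trans_lt hr)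
    fun w _ => amdEnergy_sub_le (hm _) (hmX _)).frequently

end Lyapunov

theorem stmt5_general {n : ℕ} (X : Set (EuclideanSpace ℝ (Fin n)))
    (hXcl : IsClosed X) (hXcvx : Convex ℝ X)
    (f : EuclideanSpace ℝ (Fin n) → ℝ)
    (gf : EuclideanSpace ℝ (Fin n) → EuclideanSpace ℝ (Fin n))
    (hgrad : ∀ p, HasGradientAt f (gf p) p)
    (hconv : ∀ p ∈ X, ∀ q ∈ X, f q ≥ f p + ⟪gf p, q - p⟫)
    (xstar : EuclideanSpace ℝ (Fin n)) (hxstarX : xstar ∈ X)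
    (α : ℝ → ℝ) (hαdiff : Differentiable ℝ α)
    (hαpos : ∀ t, 0 < α t) (hαinc : ∀ t, 0 < deriv α t)
    (φ : EuclideanSpace ℝ (Fin n) → ℝ)
    (hφnonneg : ∀ y ∈ X, 0 ≤ φ y)
    (m : EuclideanSpace ℝ (Fin n) → EuclideanSpace ℝ (Fin n))
    (hmX : ∀ z, m z ∈ X)
    (hmmax : ∀ z, IsMaxOn (fun p => ⟪z, p⟫ - φ p) X (m z))
    (z x : ℝ → EuclideanSpace ℝ (Fin n))
    (hz : ∀ t, HasDerivAt z (-(deriv α t) • gf (x t)) t)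
    (hx : ∀ t, HasDerivAt x ((deriv α t / α t) • (m (z t) - x t)) t)
    (hz0 : z 0 = 0) (hx0X : x 0 ∈ X) :
    ∀ t > (0 : ℝ),
      f (x t) - f xstar ≤ (α 0 * (f (x 0) - f xstar) + φ xstar) / α t := by
  intro T hT
  have hxX : ∀ t, 0 ≤ t → x t ∈ X := fun t ht =>
    hXcvx.mem_of_hasDerivAt_smul_sub hXcl (y := fun t => m (z t)) hx
      (fun t => (div_pos (hαinc t) (hαpos t)).le) (fun t => hmX (z t)) hx0X ht
  have henergy := amdEnergy_le_amdEnergy_zero hgrad hconv hxstarX hαdiff (fun t => (hαpos t).ne')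
    (fun t => (hαinc t).le) hmmax hmX hz hx hxX hT.le
  have hstar : ⟪z T, xstar⟫ - φ xstar ≤ conjugateAt φ m (z T) :=
    inner_sub_le_conjugateAt (hmmax _) hxstarX
  have hzero : conjugateAt φ m 0 ≤ 0 := by
    simpa [conjugateAt] using hφnonneg _ (hmX 0)
  simp only [amdEnergy, hz0, inner_zero_left] at henergy
  rw [le_div_iff₀ (hαpos T)]
  linarith

/-- Convergence of continuous-time accelerated mirror descent (CT-AMD):
`f(x^(t)) − f(x*) ≤ (α^(0)(f(x^(0)) − f(x*)) + φ(x*)) / α^(t)`. -/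
theorem stmt5 {n : ℕ} (X : Set (EuclideanSpace ℝ (Fin n)))
    (hXcl : IsClosed X) (hXcvx : Convex ℝ X)
    (f : EuclideanSpace ℝ (Fin n) → ℝ)
    (gf : EuclideanSpace ℝ (Fin n) → EuclideanSpace ℝ (Fin n))
    (hgrad : ∀ p, HasGradientAt f (gf p) p)
    (hgcont : Continuous gf)
    (hconv : ∀ p ∈ X, ∀ q ∈ X, f q ≥ f p + ⟪gf p, q - p⟫)
    (xstar : EuclideanSpace ℝ (Fin n)) (hxstarX : xstar ∈ X)
    (hxstarmin : ∀ y ∈ X, f xstar ≤ f y)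
    (α : ℝ → ℝ) (hαdiff : Differentiable ℝ α)
    (hαpos : ∀ t, 0 < α t) (hαinc : ∀ t, 0 < deriv α t)
    (φ : EuclideanSpace ℝ (Fin n) → ℝ)
    (hφsc : StrictConvexOn ℝ X φ) (hφnonneg : ∀ y ∈ X, 0 ≤ φ y)
    (m : EuclideanSpace ℝ (Fin n) → EuclideanSpace ℝ (Fin n))
    (hmX : ∀ z, m z ∈ X)
    (hmmax : ∀ z, IsMaxOn (fun p => ⟪z, p⟫ - φ p) X (m z))
    (z x : ℝ → EuclideanSpace ℝ (Fin n))
    (hz : ∀ t, HasDerivAt z (-(deriv α t) • gf (x t)) t)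
    (hx : ∀ t, HasDerivAt x ((deriv α t / α t) • (m (z t) - x t)) t)
    (hz0 : z 0 = 0) (hx0X : x 0 ∈ X) :
    ∀ t > (0 : ℝ),
      f (x t) - f xstar ≤ (α 0 * (f (x 0) - f xstar) + φ xstar) / α t :=
  stmt5_general X hXcl hXcvx f gf hgrad hconv xstar hxstarX α hαdiff hαpos hαinc φ hφnonneg m hmX
    hmmax z x hz hx hz0 hx0X
end

section
/- Consider continuous-time gradient flow dynamics on ℝⁿ: ż^(t) = −α̇^(t) ∇f(x^(t)), x^(t) = x^(0) + z^(t)/σ, z^(0) = 0. Then for all t > 0, f(x^(t)) − f(x*) ≤ [α^(0)(f(x^(0)) − f(x*)) + (σ/2)‖x* − x^(0)‖₂²] / α^(t). -/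
open scoped RealInnerProductSpace

/-!
The Lyapunov function `E(t) = α(t) (f(x(t)) − f(x*)) + (σ/2) ‖x* − x(t)‖²` is non-increasing
along the flow: since `ẋ = −(α̇/σ) ∇f(x)`, its derivative is
`α̇ (f(x) − f(x*) + ⟪∇f(x), x* − x⟫) − (α α̇ / σ) ‖∇f(x)‖²`, and both terms are `≤ 0`, the first
by the gradient inequality of convexity. Hence `α(t) (f(x(t)) − f(x*)) ≤ E(t) ≤ E(0)`.
-/

section

variable {E : Type*} [NormedAddCommGroup E] [InnerProductSpace ℝ E]

theorem HasGradientAt.comp_hasDerivAt [CompleteSpace E] {f : E → ℝ} {g : E} {x : ℝ → E}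
    {v : E} {t : ℝ} (hf : HasGradientAt f g (x t)) (hx : HasDerivAt x v t) :
    HasDerivAt (fun s => f (x s)) ⟪g, v⟫ t := by
  have h := hf.hasFDerivAt.comp_hasDerivAt t hx
  simp only [InnerProductSpace.toDual_apply_apply] at h
  exact h

noncomputable def gradFlowEnergy (f : E → ℝ) (σ : ℝ) (α : ℝ → ℝ) (x : ℝ → E) (xstar : E)
    (t : ℝ) : ℝ :=
  α t * (f (x t) - f xstar) + σ / 2 * ‖xstar - x t‖ ^ 2

theorem hasDerivAt_gradFlowEnergy [CompleteSpace E] {f : E → ℝ} {g : E} {σ : ℝ}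
    {α : ℝ → ℝ} {x : ℝ → E} {xstar v : E} {t : ℝ} (hf : HasGradientAt f g (x t))
    (hα : DifferentiableAt ℝ α t) (hx : HasDerivAt x v t) :
    HasDerivAt (gradFlowEnergy f σ α x xstar)
      (deriv α t * (f (x t) - f xstar) + α t * ⟪g, v⟫ - σ * ⟪xstar - x t, v⟫) t := by
  have hdist := (hx.const_sub xstar).norm_sq.const_mul (σ / 2)
  have hvalue := hα.hasDerivAt.mul ((hf.comp_hasDerivAt hx).sub_const (f xstar))
  refine (hvalue.add hdist).congr_deriv ?_
  rw [inner_neg_right]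
  ring

theorem deriv_gradFlowEnergy_nonpos [CompleteSpace E] {f : E → ℝ} {g : E} {σ : ℝ}
    {α : ℝ → ℝ} {x : ℝ → E} {xstar : E} {t : ℝ} (hf : HasGradientAt f g (x t))
    (hα : DifferentiableAt ℝ α t) (hx : HasDerivAt x (-(deriv α t / σ) • g) t) (hσ : 0 < σ)
    (hαt : 0 ≤ α t) (hα't : 0 ≤ deriv α t) (hconv : f xstar ≥ f (x t) + ⟪g, xstar - x t⟫) :
    deriv (gradFlowEnergy f σ α x xstar) t ≤ 0 := by
  rw [(hasDerivAt_gradFlowEnergy hf hα hx).deriv]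
  have hgap : deriv α t * (f (x t) - f xstar + ⟪g, xstar - x t⟫) ≤ 0 :=
    mul_nonpos_of_nonneg_of_nonpos hα't (by linarith)
  have hsq : 0 ≤ α t * (deriv α t / σ) * ‖g‖ ^ 2 := by positivity
  calc deriv α t * (f (x t) - f xstar) + α t * ⟪g, -(deriv α t / σ) • g⟫
        - σ * ⟪xstar - x t, -(deriv α t / σ) • g⟫
      = deriv α t * (f (x t) - f xstar + ⟪g, xstar - x t⟫)
          - α t * (deriv α t / σ) * ‖g‖ ^ 2 := by
        rw [real_inner_smul_right, real_inner_smul_right, real_inner_self_eq_norm_sq,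
          real_inner_comm g]
        field_simp
        ring
    _ ≤ 0 := by linarith

end

theorem stmt6_general {n : ℕ}
    (f : EuclideanSpace ℝ (Fin n) → ℝ)
    (gf : EuclideanSpace ℝ (Fin n) → EuclideanSpace ℝ (Fin n))
    (hgrad : ∀ p, HasGradientAt f (gf p) p)
    (hconv : ∀ p q, f q ≥ f p + ⟪gf p, q - p⟫)
    (xstar : EuclideanSpace ℝ (Fin n))
    (σ : ℝ) (hσ : 0 < σ)
    (α : ℝ → ℝ) (hαdiff : Differentiable ℝ α)
    (hαpos : ∀ t, 0 < α t) (hαinc : ∀ t, 0 < deriv α t)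
    (z x : ℝ → EuclideanSpace ℝ (Fin n))
    (hz : ∀ t, HasDerivAt z (-(deriv α t) • gf (x t)) t)
    (hx : ∀ t, x t = x 0 + σ⁻¹ • z t) :
    ∀ t > (0 : ℝ),
      f (x t) - f xstar ≤
        (α 0 * (f (x 0) - f xstar) + σ / 2 * ‖xstar - x 0‖ ^ 2) / α t := by
  have hflow : ∀ t, HasDerivAt x (-(deriv α t / σ) • gf (x t)) t := by
    intro t
    have h : HasDerivAt (fun s => x 0 + σ⁻¹ • z s) (σ⁻¹ • -deriv α t • gf (x t)) t :=
      ((hz t).const_smul σ⁻¹).const_add (x 0)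
    rw [← funext hx, smul_smul] at h
    refine h.congr_deriv ?_
    rw [div_eq_inv_mul, neg_mul_eq_mul_neg]
  have hanti : Antitone (gradFlowEnergy f σ α x xstar) :=
    antitone_of_deriv_nonpos
      (fun t => (hasDerivAt_gradFlowEnergy (hgrad (x t)) (hαdiff t) (hflow t)).differentiableAt)
      fun t => deriv_gradFlowEnergy_nonpos (hgrad (x t)) (hαdiff t) (hflow t) hσ (hαpos t).le
        (hαinc t).le (hconv (x t) xstar)
  intro t ht
  rw [le_div_iff₀ (hαpos t)]
  calc (f (x t) - f xstar) * α t
      ≤ gradFlowEnergy f σ α x xstar t := by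
        have hdist : 0 ≤ σ / 2 * ‖xstar - x t‖ ^ 2 := by positivity
        unfold gradFlowEnergy
        linarith
    _ ≤ gradFlowEnergy f σ α x xstar 0 := hanti ht.le

/-- Convergence of continuous-time gradient flow (CT-GD) on `ℝⁿ`:
`f(x^(t)) − f(x*) ≤ (α^(0)(f(x^(0)) − f(x*)) + (σ/2)‖x* − x^(0)‖²) / α^(t)`. -/
theorem stmt6 {n : ℕ}
    (f : EuclideanSpace ℝ (Fin n) → ℝ)
    (gf : EuclideanSpace ℝ (Fin n) → EuclideanSpace ℝ (Fin n))
    (hgrad : ∀ p, HasGradientAt f (gf p) p)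
    (hgcont : Continuous gf)
    (hconv : ∀ p q, f q ≥ f p + ⟪gf p, q - p⟫)
    (xstar : EuclideanSpace ℝ (Fin n)) (hxstarmin : ∀ y, f xstar ≤ f y)
    (σ : ℝ) (hσ : 0 < σ)
    (α : ℝ → ℝ) (hαdiff : Differentiable ℝ α)
    (hαpos : ∀ t, 0 < α t) (hαinc : ∀ t, 0 < deriv α t)
    (z x : ℝ → EuclideanSpace ℝ (Fin n))
    (hz : ∀ t, HasDerivAt z (-(deriv α t) • gf (x t)) t)
    (hx : ∀ t, x t = x 0 + σ⁻¹ • z t)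
    (hz0 : z 0 = 0) :
    ∀ t > (0 : ℝ),
      f (x t) - f xstar ≤
        (α 0 * (f (x 0) - f xstar) + σ / 2 * ‖xstar - x 0‖ ^ 2) / α t :=
  stmt6_general f gf hgrad hconv xstar σ hσ α hαdiff hαpos hαinc z x hz hx
end

section
/- The per-step discretization error of forward-Euler lazy mirror descent equals E_d^(i) = −a_i⟨∇f(x^(i)), ∇φ*(z^(i)) − x^(i)⟩ − D_{φ*}(z^(i−1), z^(i)); i.e., the discrete duality-gap evolution satisfies A^(i) G^(i) − A^(i−1) G^(i−1) ≤ E_d^(i). -/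
open scoped RealInnerProductSpace

/-- The per-step discretization error of forward-Euler lazy mirror descent: the scaled
approximate duality gap satisfies `A^(i) G^(i) − A^(i−1) G^(i−1) ≤ E_d^(i)` where
`E_d^(i) = −a_i⟪∇f(x^(i)), ∇φ*(z^(i)) − x^(i)⟫ − D_{φ*}(z^(i−1), z^(i))`. -/
theorem stmt9 {n : ℕ} (X : Set (EuclideanSpace ℝ (Fin n)))
    (hXcl : IsClosed X) (hXcvx : Convex ℝ X)
    (f : EuclideanSpace ℝ (Fin n) → ℝ)
    (gf : EuclideanSpace ℝ (Fin n) → EuclideanSpace ℝ (Fin n))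
    (hconv : ∀ p ∈ X, ∀ q ∈ X, f q ≥ f p + ⟪gf p, q - p⟫)
    (xstar : EuclideanSpace ℝ (Fin n)) (hxstarX : xstar ∈ X)
    (hxstarmin : ∀ y ∈ X, f xstar ≤ f y)
    (φ : EuclideanSpace ℝ (Fin n) → ℝ)
    (hφsc : StrictConvexOn ℝ X φ) (hφnonneg : ∀ y ∈ X, 0 ≤ φ y)
    (φs : EuclideanSpace ℝ (Fin n) → ℝ)
    (m : EuclideanSpace ℝ (Fin n) → EuclideanSpace ℝ (Fin n))
    (hmX : ∀ w, m w ∈ X)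
    (hmmax : ∀ w, IsMaxOn (fun p => ⟪w, p⟫ - φ p) X (m w))
    (hφs : ∀ w, φs w = ⟪w, m w⟫ - φ (m w))
    (a A : ℕ → ℝ) (hapos : ∀ i, 0 < a i)
    (hA : ∀ i, A i = ∑ j ∈ Finset.range (i + 1), a j)
    (z x : ℕ → EuclideanSpace ℝ (Fin n))
    (hxX : ∀ i, x i ∈ X)
    (hz0 : z 0 = -(a 0) • gf (x 0))
    (hz : ∀ i, z (i + 1) = z i - a (i + 1) • gf (x (i + 1)))
    (hx : ∀ i, x (i + 1) = m (z i))
    (U Lo G : ℕ → ℝ)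
    (hU : ∀ i, U i = (∑ j ∈ Finset.range (i + 1), a j * f (x j)) / A i)
    (hLo : ∀ i, Lo i =
      ((∑ j ∈ Finset.range (i + 1), a j * f (x j)) +
        sInf ((fun u =>
          (∑ j ∈ Finset.range (i + 1), a j * ⟪gf (x j), u - x j⟫) + φ u) '' X) -
        φ xstar) / A i)
    (hG : ∀ i, G i = U i - Lo i) :
    ∀ i : ℕ,
      A (i + 1) * G (i + 1) - A i * G i ≤
        -(a (i + 1)) * ⟪gf (x (i + 1)), m (z (i + 1)) - x (i + 1)⟫ -
          (φs (z i) - φs (z (i + 1)) - ⟪m (z (i + 1)), z i - z (i + 1)⟫) := by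
  have hApos : ∀ k, 0 < A k := by
    intro k
    rw [hA]
    exact Finset.sum_pos (fun j _ => hapos j) (by simp)
  have hzsum : ∀ k, z k = -∑ j ∈ Finset.range (k + 1), a j • gf (x j) := by
    intro k
    induction k with
    | zero => simpa using hz0
    | succ k ih =>
      rw [hz k, ih, Finset.sum_range_succ (fun j => a j • gf (x j)) (k + 1)]
      abel
  have hsum : ∀ k, ∀ u : EuclideanSpace ℝ (Fin n),
      (∑ j ∈ Finset.range (k + 1), a j * ⟪gf (x j), u - x j⟫)
        = -⟪z k, u⟫ - ∑ j ∈ Finset.range (k + 1), a j * ⟪gf (x j), x j⟫ := by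
    intro k u
    have h1 : ⟪z k, u⟫ = -∑ j ∈ Finset.range (k + 1), a j * ⟪gf (x j), u⟫ := by
      rw [hzsum k, inner_neg_left]
      congr 1
      rw [sum_inner]
      exact Finset.sum_congr rfl fun j _ => real_inner_smul_left _ _ _
    have h2 : (∑ j ∈ Finset.range (k + 1), a j * ⟪gf (x j), u - x j⟫)
        = (∑ j ∈ Finset.range (k + 1), a j * ⟪gf (x j), u⟫)
          - ∑ j ∈ Finset.range (k + 1), a j * ⟪gf (x j), x j⟫ := by
      rw [← Finset.sum_sub_distrib]
      exact Finset.sum_congr rfl fun j _ => by rw [inner_sub_right]; ring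
    rw [h2, h1]
    ring
  have hInf : ∀ k, sInf ((fun u =>
      (∑ j ∈ Finset.range (k + 1), a j * ⟪gf (x j), u - x j⟫) + φ u) '' X)
      = (∑ j ∈ Finset.range (k + 1), a j * ⟪gf (x j), m (z k) - x j⟫) + φ (m (z k)) := by
    intro k
    apply IsLeast.csInf_eq
    constructor
    · exact ⟨m (z k), hmX _, rfl⟩
    · rintro v ⟨u, huX, rfl⟩
      have h2 := hmmax (z k) huX
      simp only [Set.mem_setOf_eq] at h2
      dsimp only
      rw [hsum k u, hsum k (m (z k))]
      linarith
  have hAG : ∀ k, A k * G k = φ xstar - sInf ((fun u =>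
      (∑ j ∈ Finset.range (k + 1), a j * ⟪gf (x j), u - x j⟫) + φ u) '' X) := by
    intro k
    rw [hG k, hU k, hLo k, mul_sub, mul_div_cancel₀ _ (hApos k).ne',
      mul_div_cancel₀ _ (hApos k).ne']
    ring
  intro i
  rw [hAG, hAG, hInf, hInf]
  have hφsz : φs (z i) = ⟪z i, m (z i)⟫ - φ (m (z i)) := hφs _
  have hφsz' : φs (z (i + 1)) = ⟪z (i + 1), m (z (i + 1))⟫ - φ (m (z (i + 1))) := hφs _
  have hs1 := hsum i (m (z i))
  have hs3 := hsum (i + 1) (m (z (i + 1)))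
  have hC : (∑ j ∈ Finset.range (i + 1 + 1), a j * ⟪gf (x j), x j⟫)
      = (∑ j ∈ Finset.range (i + 1), a j * ⟪gf (x j), x j⟫)
        + a (i + 1) * ⟪gf (x (i + 1)), x (i + 1)⟫ := Finset.sum_range_succ _ _
  have hzd : ⟪m (z (i + 1)), z i - z (i + 1)⟫
      = a (i + 1) * ⟪gf (x (i + 1)), m (z (i + 1))⟫ := by
    rw [hz i, sub_sub_cancel, real_inner_smul_right, real_inner_comm]
  have hd : a (i + 1) * ⟪gf (x (i + 1)), m (z (i + 1)) - x (i + 1)⟫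
      = a (i + 1) * ⟪gf (x (i + 1)), m (z (i + 1))⟫
        - a (i + 1) * ⟪gf (x (i + 1)), x (i + 1)⟫ := by
    rw [inner_sub_right]; ring
  rw [hs1, hs3, hφsz, hφsz', hzd, hC]
  linarith [hd]
end

section
/- Let f: X → ℝ be L-smooth and convex, ψ σ-strongly convex, φ(·) = D_ψ(·, x^(0)). Let the Nesterov accelerated iteration be z^(i) = z^(i−1) − a_i∇f(x^(i)), x^(i) = (A^(i−1)/A^(i)) x̂^(i−1) + (a_i/A^(i)) ∇φ*(z^(i−1)), x̂^(i) = Grad(x^(i)) := argmin_{x∈X}{⟨∇f(x^(i)), x − x^(i)⟩ + (L/2)‖x − x^(i)‖²}, with a_i = (σ/L)(i+1)/2. Then for all k ≥ 1, f(x̂^(k)) − f(x*) ≤ (4L/σ) · D_ψ(x*, x^(0)) / ((k+1)(k+2)). -/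
/-! Estimate sequences. Let `ℓᵢ` be the `a`-weighted sum of the linearizations of `f` at
`x⁽⁰⁾, …, x⁽ⁱ⁾` and `φ = D_ψ(·, x⁽⁰⁾)`. By induction, `A⁽ⁱ⁾ f(x̂⁽ⁱ⁾) ≤ ℓᵢ(y) + φ(y)` for all
`y ∈ X`: the mirror point `∇φ*(z⁽ⁱ⁾)` minimizes the `σ`-strongly convex model `ℓᵢ + φ`, so the
model grows by `σ/2 ‖y - ∇φ*(z⁽ⁱ⁾)‖²` away from it, and the gradient step at the convex
combination `x⁽ⁱ⁺¹⁾` pays for the new linearization as soon as `L a_{i+1}² ≤ σ A⁽ⁱ⁺¹⁾`.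
Convexity gives `ℓₖ ≤ A⁽ᵏ⁾ f`, hence `A⁽ᵏ⁾ (f(x̂⁽ᵏ⁾) - f(y)) ≤ D_ψ(y, x⁽⁰⁾)`, and for
`aᵢ = (σ/L)(i+1)/2` one has `A⁽ᵏ⁾ = σ(k+1)(k+2)/(4L)`. -/

open scoped RealInnerProductSpace
open Finset

variable {E : Type*} [NormedAddCommGroup E] [InnerProductSpace ℝ E]

-- `g'` is only required to satisfy the first-order inequality; it need not be a derivative of `g`.
def FirstOrderStrongConvexOn (X : Set E) (σ : ℝ) (g : E → ℝ) (g' : E → E) : Prop :=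
  ∀ p ∈ X, ∀ q ∈ X, g p + ⟪g' p, q - p⟫ + σ / 2 * ‖q - p‖ ^ 2 ≤ g q

def bregmanDiv (ψ : E → ℝ) (gψ : E → E) (x₀ p : E) : ℝ :=
  ψ p - ψ x₀ - ⟪gψ x₀, p - x₀⟫

namespace FirstOrderStrongConvexOn

variable {X : Set E} {σ : ℝ} {g : E → ℝ} {g' : E → E}

theorem sub_inner (h : FirstOrderStrongConvexOn X σ g g') (w : E) :
    FirstOrderStrongConvexOn X σ (fun p => g p - ⟪w, p⟫) (fun p => g' p - w) := by
  intro p hp q hq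
  have := h p hp q hq
  simp only [inner_sub_left, inner_sub_right] at this ⊢
  linarith

theorem bregmanDiv (h : FirstOrderStrongConvexOn X σ g g') (x₀ : E) :
    FirstOrderStrongConvexOn X σ (_root_.bregmanDiv g g' x₀) (fun p => g' p - g' x₀) := by
  intro p hp q hq
  have := h p hp q hq
  simp only [_root_.bregmanDiv, inner_sub_left, inner_sub_right] at this ⊢
  linarith

-- Nothing links `g'` at different points, so both inequalities are taken at the same point
-- `v + t • (y - v)`; the loss `σ t / 2 ‖y - v‖²` disappears as `t → 0`.
theorem add_mul_sq_norm_sub_le_of_isMinOn (h : FirstOrderStrongConvexOn X σ g g')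
    (hX : Convex ℝ X) {v y : E} (hv : v ∈ X) (hy : y ∈ X) (hmin : IsMinOn g X v)
    {t : ℝ} (ht₀ : 0 < t) (ht₁ : t < 1) :
    g v + σ * (1 - t) / 2 * ‖y - v‖ ^ 2 ≤ g y := by
  set w := v + t • (y - v)
  have hw : w ∈ X := hX.add_smul_sub_mem hv hy ⟨ht₀.le, ht₁.le⟩
  have hwv : v - w = (-t) • (y - v) := by simp only [w]; module
  have hwy : y - w = (1 - t) • (y - v) := by simp only [w]; module
  have hv' := h w hw v hv
  have hy' := h w hw y hy
  rw [hwv, real_inner_smul_right, norm_smul, mul_pow, Real.norm_eq_abs, sq_abs] at hv'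
  rw [hwy, real_inner_smul_right, norm_smul, mul_pow, Real.norm_eq_abs, sq_abs] at hy'
  have hvw : g v ≤ g w := hmin hw
  have hslope : σ * t / 2 * ‖y - v‖ ^ 2 ≤ ⟪g' w, y - v⟫ := by
    refine le_of_mul_le_mul_left ?_ ht₀
    nlinarith
  nlinarith

theorem add_sq_norm_sub_le_of_isMinOn (h : FirstOrderStrongConvexOn X σ g g')
    (hX : Convex ℝ X) {v : E} (hv : v ∈ X) (hmin : IsMinOn g X v) {y : E} (hy : y ∈ X) :
    g v + σ / 2 * ‖y - v‖ ^ 2 ≤ g y := by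
  have hcont : Continuous fun t : ℝ => g v + σ * (1 - t) / 2 * ‖y - v‖ ^ 2 := by fun_prop
  have hlim := (hcont.tendsto 0).mono_left (nhdsWithin_le_nhds (s := Set.Ioi 0))
  simp only [sub_zero, mul_one] at hlim
  refine le_of_tendsto hlim ?_
  filter_upwards [Ioo_mem_nhdsGT (zero_lt_one' ℝ)] with t ht
  exact h.add_mul_sq_norm_sub_le_of_isMinOn hX hv hy hmin ht.1 ht.2

theorem add_sq_norm_sub_le_of_isMaxOn_inner_sub (h : FirstOrderStrongConvexOn X σ g g')
    (hX : Convex ℝ X) {w v : E} (hv : v ∈ X) (hmax : IsMaxOn (fun p => ⟪w, p⟫ - g p) X v)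
    {y : E} (hy : y ∈ X) :
    g v - ⟪w, v⟫ + σ / 2 * ‖y - v‖ ^ 2 ≤ g y - ⟪w, y⟫ := by
  refine (h.sub_inner w).add_sq_norm_sub_le_of_isMinOn hX hv (fun p hp => ?_) hy
  have : ⟪w, p⟫ - g p ≤ ⟪w, v⟫ - g v := hmax hp
  show g v - ⟪w, v⟫ ≤ g p - ⟪w, p⟫
  linarith

end FirstOrderStrongConvexOn

def linearModel (f : E → ℝ) (gf : E → E) (a : ℕ → ℝ) (x : ℕ → E) (i : ℕ) (y : E) : ℝ :=
  ∑ j ∈ range (i + 1), a j * (f (x j) + ⟪gf (x j), y - x j⟫)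

section LinearModel

variable {f : E → ℝ} {gf : E → E} {a : ℕ → ℝ} {x : ℕ → E}

theorem linearModel_succ (i : ℕ) (y : E) :
    linearModel f gf a x (i + 1) y =
      linearModel f gf a x i y + a (i + 1) * (f (x (i + 1)) + ⟪gf (x (i + 1)), y - x (i + 1)⟫) :=
  sum_range_succ _ _

theorem linearModel_sub (i : ℕ) (p q : E) :
    linearModel f gf a x i p - linearModel f gf a x i q =
      ⟪∑ j ∈ range (i + 1), a j • gf (x j), p - q⟫ := by
  rw [linearModel, linearModel, ← sum_sub_distrib, sum_inner]
  refine sum_congr rfl fun j _ => ?_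
  rw [real_inner_smul_left, inner_sub_right, inner_sub_right, inner_sub_right]
  ring

theorem linearModel_le {X : Set E} (hconv : ∀ p ∈ X, ∀ q ∈ X, f p + ⟪gf p, q - p⟫ ≤ f q)
    (ha : ∀ j, 0 ≤ a j) (hx : ∀ j, x j ∈ X) (i : ℕ) {y : E} (hy : y ∈ X) :
    linearModel f gf a x i y ≤ (∑ j ∈ range (i + 1), a j) * f y := by
  rw [linearModel, sum_mul]
  exact sum_le_sum fun j _ => mul_le_mul_of_nonneg_left (hconv _ (hx j) _ hy) (ha j)

end LinearModel

theorem descent_of_isMinOn {X : Set E} {f : E → ℝ} {gf grad : E → E} {L : ℝ}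
    (hsmooth : ∀ p ∈ X, ∀ q ∈ X, f q ≤ f p + ⟪gf p, q - p⟫ + L / 2 * ‖q - p‖ ^ 2)
    (hgradX : ∀ p, grad p ∈ X)
    (hgradmin : ∀ p, IsMinOn (fun u => ⟪gf p, u - p⟫ + L / 2 * ‖u - p‖ ^ 2) X (grad p))
    (p : E) (hp : p ∈ X) (u : E) (hu : u ∈ X) :
    f (grad p) ≤ f p + ⟪gf p, u - p⟫ + L / 2 * ‖u - p‖ ^ 2 := by
  have hmin : ⟪gf p, grad p - p⟫ + L / 2 * ‖grad p - p‖ ^ 2 ≤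
      ⟪gf p, u - p⟫ + L / 2 * ‖u - p‖ ^ 2 := hgradmin p hu
  linarith [hsmooth p hp _ (hgradX p)]

theorem mem_of_add_smul_eq {X : Set E} (hX : Convex ℝ X) {A a : ℝ} (hA : 0 ≤ A) (ha : 0 < a)
    {p q r : E} (hp : p ∈ X) (hq : q ∈ X) (hr : (A + a) • r = A • p + a • q) : r ∈ X := by
  have hAa : A + a ≠ 0 := by positivity
  have : r = (A / (A + a)) • p + (a / (A + a)) • q := by
    rw [div_eq_inv_mul, div_eq_inv_mul, mul_smul, mul_smul, ← smul_add, ← hr, smul_smul,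
      inv_mul_cancel₀ hAa, one_smul]
  rw [this]
  exact hX hp hq (by positivity) (by positivity) (by field_simp)

theorem accelerated_step_mul_le {X : Set E} (hX : Convex ℝ X) {f : E → ℝ} {gf : E → E} {L σ : ℝ}
    {Ψ : E → ℝ} {A a : ℝ} {xh v x' xh' y : E}
    (hA : 0 ≤ A) (ha : 0 < a) (hstep : L * a ^ 2 ≤ σ * (A + a))
    (hxh : xh ∈ X) (hy : y ∈ X) (hx' : (A + a) • x' = A • xh + a • v)
    (hconv : f x' + ⟪gf x', xh - x'⟫ ≤ f xh)
    (hdescent : ∀ u ∈ X, f xh' ≤ f x' + ⟪gf x', u - x'⟫ + L / 2 * ‖u - x'‖ ^ 2)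
    (hinv : A * f xh ≤ Ψ v) (hΨ : Ψ v + σ / 2 * ‖y - v‖ ^ 2 ≤ Ψ y) :
    (A + a) * f xh' ≤ Ψ y + a * (f x' + ⟪gf x', y - x'⟫) := by
  have hAa : 0 < A + a := by positivity
  set c := a / (A + a)
  -- Comparing the gradient step with this point converts the growth `σ/2 ‖y - v‖²` of the
  -- model into the `L/2` term of the descent bound.
  have hu : (A + a) • (x' + c • (y - v)) = A • xh + a • y := by
    rw [smul_add, hx', smul_smul, mul_div_cancel₀ _ hAa.ne']
    module
  have hdesc := hdescent _ (mem_of_add_smul_eq hX hA ha hxh hy hu)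
  rw [add_sub_cancel_left, real_inner_smul_right, norm_smul, mul_pow, Real.norm_eq_abs,
    sq_abs] at hdesc
  have hcomb : A • (xh - x') + a • (y - x') = a • (y - v) := by
    linear_combination (norm := module) -hx'
  have hinner : A * ⟪gf x', xh - x'⟫ + a * ⟪gf x', y - x'⟫ = a * ⟪gf x', y - v⟫ := by
    rw [← real_inner_smul_right, ← real_inner_smul_right, ← inner_add_right, hcomb,
      real_inner_smul_right]
  have hquad : (A + a) * (L / 2 * (c ^ 2 * ‖y - v‖ ^ 2)) ≤ σ / 2 * ‖y - v‖ ^ 2 := by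
    have : (A + a) * (L / 2 * (c ^ 2 * ‖y - v‖ ^ 2)) = L * a ^ 2 / (A + a) / 2 * ‖y - v‖ ^ 2 := by
      simp only [c]; field_simp
    rw [this]
    gcongr
    rwa [div_le_iff₀ hAa]
  calc (A + a) * f xh'
      ≤ (A + a) * (f x' + c * ⟪gf x', y - v⟫ + L / 2 * (c ^ 2 * ‖y - v‖ ^ 2)) :=
        mul_le_mul_of_nonneg_left hdesc hAa.le
    _ = (A + a) * f x' + a * ⟪gf x', y - v⟫ + (A + a) * (L / 2 * (c ^ 2 * ‖y - v‖ ^ 2)) := by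
        rw [mul_add, mul_add, ← mul_assoc, mul_div_cancel₀ _ hAa.ne']
    _ ≤ A * f xh + a * (f x' + ⟪gf x', y - x'⟫) + σ / 2 * ‖y - v‖ ^ 2 := by nlinarith
    _ ≤ Ψ y + a * (f x' + ⟪gf x', y - x'⟫) := by linarith

section AcceleratedMethod

variable {X : Set E} {f : E → ℝ} {gf : E → E} {L σ : ℝ} {ψ : E → ℝ} {gψ : E → E}
  {m grad : E → E} {a A : ℕ → ℝ} {z x xh : ℕ → E}

theorem accelerated_iterate_mem (hX : Convex ℝ X) (ha : ∀ i, 0 < a i)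
    (hA : ∀ i, A i = ∑ j ∈ range (i + 1), a j) (hmX : ∀ w, m w ∈ X) (hgradX : ∀ p, grad p ∈ X)
    (hx₀ : x 0 ∈ X) (hxh : ∀ i, xh i = grad (x i))
    (hx : ∀ i, A (i + 1) • x (i + 1) = A i • xh i + a (i + 1) • m (z i)) (i : ℕ) :
    x i ∈ X := by
  cases i with
  | zero => exact hx₀
  | succ i =>
    refine mem_of_add_smul_eq hX (hA i ▸ sum_nonneg fun j _ => (ha j).le) (ha (i + 1))
      (hxh i ▸ hgradX _) (hmX (z i)) ?_
    rw [← hx, hA (i + 1), hA i, sum_range_succ _ (i + 1)]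

theorem accelerated_le_linearModel_add_bregmanDiv (hX : Convex ℝ X)
    (hconv : ∀ p ∈ X, ∀ q ∈ X, f p + ⟪gf p, q - p⟫ ≤ f q)
    (hψ : FirstOrderStrongConvexOn X σ ψ gψ)
    (hmX : ∀ w, m w ∈ X) (hmmax : ∀ w, IsMaxOn (fun p => ⟪w, p⟫ - bregmanDiv ψ gψ (x 0) p) X (m w))
    (hgradX : ∀ p, grad p ∈ X)
    (hdescent : ∀ p ∈ X, ∀ u ∈ X, f (grad p) ≤ f p + ⟪gf p, u - p⟫ + L / 2 * ‖u - p‖ ^ 2)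
    (ha : ∀ i, 0 < a i) (hA : ∀ i, A i = ∑ j ∈ range (i + 1), a j)
    (hstep : ∀ i, L * a i ^ 2 ≤ σ * A i)
    (hx₀ : x 0 ∈ X) (hz : ∀ i, z i = -∑ j ∈ range (i + 1), a j • gf (x j))
    (hxh : ∀ i, xh i = grad (x i))
    (hx : ∀ i, A (i + 1) • x (i + 1) = A i • xh i + a (i + 1) • m (z i)) (i : ℕ) {y : E}
    (hy : y ∈ X) :
    A i * f (xh i) ≤ linearModel f gf a x i y + bregmanDiv ψ gψ (x 0) y := by
  have hxX := accelerated_iterate_mem hX ha hA hmX hgradX hx₀ hxh hx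
  have hφ := hψ.bregmanDiv (x 0)
  induction i generalizing y with
  | zero =>
    -- the general step from `A = 0`, with `x̂ = v = x⁽⁰⁾` the minimizer of `D_ψ(·, x⁽⁰⁾)`
    have h := accelerated_step_mul_le (Ψ := bregmanDiv ψ gψ (x 0)) (A := 0) (xh := x 0) (v := x 0)
      hX le_rfl (ha 0) (by simpa [hA] using hstep 0) hx₀ hy (by simp) (by simp)
      (hxh 0 ▸ hdescent _ hx₀) (by simp [bregmanDiv])
      (by simpa using hφ (x 0) hx₀ y hy)
    rw [hA, sum_range_one, linearModel, sum_range_one]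
    linarith
  | succ i ih =>
    have hAsucc : A (i + 1) = A i + a (i + 1) := by rw [hA, hA, sum_range_succ]
    have hmirror := hφ.add_sq_norm_sub_le_of_isMaxOn_inner_sub hX (hmX _) (hmmax (z i)) hy
    have hmodel := linearModel_sub (f := f) (gf := gf) (a := a) (x := x) i y (m (z i))
    rw [← neg_neg (∑ j ∈ _, _), ← hz, inner_neg_left, inner_sub_right] at hmodel
    have h := accelerated_step_mul_le
      (Ψ := fun p => linearModel f gf a x i p + bregmanDiv ψ gψ (x 0) p) hX (hA i ▸ sum_nonneg fun j _ => (ha j).le) (ha (i + 1)) (hAsucc ▸ hstep (i + 1))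
      (hxh i ▸ hgradX _) hy (hAsucc ▸ hx i) (hconv _ (hxX _) _ (hxh i ▸ hgradX _))
      (hxh (i + 1) ▸ hdescent _ (hxX _)) (ih (hmX _)) (by linarith)
    rw [hAsucc, linearModel_succ]
    linarith

theorem accelerated_mul_sub_le_bregmanDiv (hX : Convex ℝ X)
    (hconv : ∀ p ∈ X, ∀ q ∈ X, f p + ⟪gf p, q - p⟫ ≤ f q)
    (hψ : FirstOrderStrongConvexOn X σ ψ gψ)
    (hmX : ∀ w, m w ∈ X) (hmmax : ∀ w, IsMaxOn (fun p => ⟪w, p⟫ - bregmanDiv ψ gψ (x 0) p) X (m w))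
    (hgradX : ∀ p, grad p ∈ X)
    (hdescent : ∀ p ∈ X, ∀ u ∈ X, f (grad p) ≤ f p + ⟪gf p, u - p⟫ + L / 2 * ‖u - p‖ ^ 2)
    (ha : ∀ i, 0 < a i) (hA : ∀ i, A i = ∑ j ∈ range (i + 1), a j)
    (hstep : ∀ i, L * a i ^ 2 ≤ σ * A i)
    (hx₀ : x 0 ∈ X) (hz : ∀ i, z i = -∑ j ∈ range (i + 1), a j • gf (x j))
    (hxh : ∀ i, xh i = grad (x i))
    (hx : ∀ i, A (i + 1) • x (i + 1) = A i • xh i + a (i + 1) • m (z i)) (k : ℕ) {y : E}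
    (hy : y ∈ X) :
    A k * (f (xh k) - f y) ≤ bregmanDiv ψ gψ (x 0) y := by
  have hinv := accelerated_le_linearModel_add_bregmanDiv hX hconv hψ hmX hmmax hgradX hdescent
    ha hA hstep hx₀ hz hxh hx k hy
  have hmodel := linearModel_le hconv (fun j => (ha j).le)
    (accelerated_iterate_mem hX ha hA hmX hgradX hx₀ hxh hx) k hy
  rw [← hA] at hmodel
  linarith

end AcceleratedMethod

theorem sum_range_linear_weights (σ : ℝ) {L : ℝ} (hL : L ≠ 0) (i : ℕ) :
    ∑ j ∈ range (i + 1), σ / L * ((j : ℝ) + 1) / 2 = σ * (i + 1) * (i + 2) / (4 * L) := by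
  induction i with
  | zero =>
    simp only [zero_add, range_one, sum_singleton, CharP.cast_eq_zero, mul_one]
    field_simp
    ring
  | succ i ih => rw [sum_range_succ, ih]; push_cast; field_simp; ring

theorem mul_linear_weight_sq_le (σ : ℝ) {L : ℝ} (hL : 0 < L) (i : ℕ) :
    L * (σ / L * ((i : ℝ) + 1) / 2) ^ 2 ≤ σ * (σ * (i + 1) * (i + 2) / (4 * L)) := by
  have hlhs : L * (σ / L * ((i : ℝ) + 1) / 2) ^ 2 = σ ^ 2 / (4 * L) * ((i + 1) * (i + 1)) := by
    field_simp; ring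
  have hrhs : σ * (σ * (i + 1) * (i + 2) / (4 * L)) = σ ^ 2 / (4 * L) * ((i + 1) * (i + 2)) := by
    field_simp
  rw [hlhs, hrhs]
  gcongr
  linarith

theorem stmt10_general {n : ℕ} (X : Set (EuclideanSpace ℝ (Fin n)))
    (hXcvx : Convex ℝ X)
    (f : EuclideanSpace ℝ (Fin n) → ℝ)
    (gf : EuclideanSpace ℝ (Fin n) → EuclideanSpace ℝ (Fin n))
    (L : ℝ) (hL : 0 < L)
    (hsmooth : ∀ p ∈ X, ∀ q ∈ X,
      f q ≤ f p + ⟪gf p, q - p⟫ + L / 2 * ‖q - p‖ ^ 2)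
    (hconv : ∀ p ∈ X, ∀ q ∈ X, f q ≥ f p + ⟪gf p, q - p⟫)
    (ψ : EuclideanSpace ℝ (Fin n) → ℝ)
    (gψ : EuclideanSpace ℝ (Fin n) → EuclideanSpace ℝ (Fin n))
    (σ : ℝ) (hσ : 0 < σ)
    (hstrong : ∀ p ∈ X, ∀ q ∈ X,
      ψ q ≥ ψ p + ⟪gψ p, q - p⟫ + σ / 2 * ‖q - p‖ ^ 2)
    (xstar : EuclideanSpace ℝ (Fin n)) (hxstarX : xstar ∈ X)
    (z x xh : ℕ → EuclideanSpace ℝ (Fin n))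
    (hx0X : x 0 ∈ X)
    (φ : EuclideanSpace ℝ (Fin n) → ℝ)
    (hφ : ∀ p, φ p = ψ p - ψ (x 0) - ⟪gψ (x 0), p - x 0⟫)
    (m : EuclideanSpace ℝ (Fin n) → EuclideanSpace ℝ (Fin n))
    (hmX : ∀ w, m w ∈ X)
    (hmmax : ∀ w, IsMaxOn (fun p => ⟪w, p⟫ - φ p) X (m w))
    (grad : EuclideanSpace ℝ (Fin n) → EuclideanSpace ℝ (Fin n))
    (hgradX : ∀ p, grad p ∈ X)
    (hgradmin : ∀ p, IsMinOn
      (fun u => ⟪gf p, u - p⟫ + L / 2 * ‖u - p‖ ^ 2) X (grad p))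
    (a A : ℕ → ℝ)
    (hA : ∀ i, A i = ∑ j ∈ Finset.range (i + 1), a j)
    (ha : ∀ i : ℕ, a i = σ / L * (i + 1) / 2)
    (hz0 : z 0 = -(a 0) • gf (x 0)) (hxh0 : xh 0 = grad (x 0))
    (hz : ∀ i, z (i + 1) = z i - a (i + 1) • gf (x (i + 1)))
    (hx : ∀ i, x (i + 1) =
      (A i / A (i + 1)) • xh i + (a (i + 1) / A (i + 1)) • m (z i))
    (hxh : ∀ i, xh (i + 1) = grad (x (i + 1)))
    (k : ℕ) :
    f (xh k) - f xstar ≤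
      4 * L / σ * ((ψ xstar - ψ (x 0) - ⟪gψ (x 0), xstar - x 0⟫) /
        ((k + 1) * (k + 2))) := by
  obtain rfl : φ = bregmanDiv ψ gψ (x 0) := funext hφ
  have hapos : ∀ i, 0 < a i := fun i => by rw [ha]; positivity
  have hAeq : ∀ i, A i = σ * (i + 1) * (i + 2) / (4 * L) := fun i => by
    simp only [hA, ha]
    exact sum_range_linear_weights σ hL.ne' i
  have hzsum : ∀ i, z i = -∑ j ∈ range (i + 1), a j • gf (x j) := by
    intro i
    induction i with
    | zero => rw [hz0, sum_range_one, neg_smul]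
    | succ i ih => rw [hz, ih, sum_range_succ _ (i + 1)]; abel
  have hxh' : ∀ i, xh i = grad (x i) := by rintro (_ | i); exacts [hxh0, hxh i]
  have hx' : ∀ i, A (i + 1) • x (i + 1) = A i • xh i + a (i + 1) • m (z i) := fun i => by
    have hA' : A (i + 1) ≠ 0 := by rw [hAeq]; positivity
    rw [hx, smul_add, smul_smul, smul_smul, mul_div_cancel₀ _ hA', mul_div_cancel₀ _ hA']
  have hbound := accelerated_mul_sub_le_bregmanDiv hXcvx hconv hstrong hmX hmmax hgradX
    (descent_of_isMinOn hsmooth hgradX hgradmin) hapos hA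
    (fun i => by rw [ha, hAeq]; exact mul_linear_weight_sq_le σ hL i) hx0X hzsum hxh' hx' k hxstarX
  rw [hAeq] at hbound
  calc f (xh k) - f xstar
      ≤ bregmanDiv ψ gψ (x 0) xstar / (σ * (k + 1) * (k + 2) / (4 * L)) := by
        rw [le_div_iff₀ (by positivity)]
        linarith
    _ = 4 * L / σ * (bregmanDiv ψ gψ (x 0) xstar / ((k + 1) * (k + 2))) := by
        field_simp

/-- Convergence of Nesterov's accelerated method for `L`-smooth convex minimization
(Theorem `thm:amd-conv`): with `a_i = (σ/L)(i+1)/2`,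
`f(x̂^(k)) − f(x*) ≤ (4L/σ) D_ψ(x*, x^(0)) / ((k+1)(k+2))`. -/
theorem stmt10 {n : ℕ} (X : Set (EuclideanSpace ℝ (Fin n)))
    (hXcl : IsClosed X) (hXcvx : Convex ℝ X)
    (f : EuclideanSpace ℝ (Fin n) → ℝ)
    (gf : EuclideanSpace ℝ (Fin n) → EuclideanSpace ℝ (Fin n))
    (L : ℝ) (hL : 0 < L)
    (hsmooth : ∀ p ∈ X, ∀ q ∈ X,
      f q ≤ f p + ⟪gf p, q - p⟫ + L / 2 * ‖q - p‖ ^ 2)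
    (hconv : ∀ p ∈ X, ∀ q ∈ X, f q ≥ f p + ⟪gf p, q - p⟫)
    (ψ : EuclideanSpace ℝ (Fin n) → ℝ)
    (gψ : EuclideanSpace ℝ (Fin n) → EuclideanSpace ℝ (Fin n))
    (σ : ℝ) (hσ : 0 < σ)
    (hstrong : ∀ p ∈ X, ∀ q ∈ X,
      ψ q ≥ ψ p + ⟪gψ p, q - p⟫ + σ / 2 * ‖q - p‖ ^ 2)
    (xstar : EuclideanSpace ℝ (Fin n)) (hxstarX : xstar ∈ X)
    (hxstarmin : ∀ y ∈ X, f xstar ≤ f y)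
    (z x xh : ℕ → EuclideanSpace ℝ (Fin n))
    (hx0X : x 0 ∈ X)
    (φ : EuclideanSpace ℝ (Fin n) → ℝ)
    (hφ : ∀ p, φ p = ψ p - ψ (x 0) - ⟪gψ (x 0), p - x 0⟫)
    (m : EuclideanSpace ℝ (Fin n) → EuclideanSpace ℝ (Fin n))
    (hmX : ∀ w, m w ∈ X)
    (hmmax : ∀ w, IsMaxOn (fun p => ⟪w, p⟫ - φ p) X (m w))
    (grad : EuclideanSpace ℝ (Fin n) → EuclideanSpace ℝ (Fin n))
    (hgradX : ∀ p, grad p ∈ X)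
    (hgradmin : ∀ p, IsMinOn
      (fun u => ⟪gf p, u - p⟫ + L / 2 * ‖u - p‖ ^ 2) X (grad p))
    (a A : ℕ → ℝ)
    (hA : ∀ i, A i = ∑ j ∈ Finset.range (i + 1), a j)
    (ha : ∀ i : ℕ, a i = σ / L * (i + 1) / 2)
    (hz0 : z 0 = -(a 0) • gf (x 0)) (hxh0 : xh 0 = grad (x 0))
    (hz : ∀ i, z (i + 1) = z i - a (i + 1) • gf (x (i + 1)))
    (hx : ∀ i, x (i + 1) =
      (A i / A (i + 1)) • xh i + (a (i + 1) / A (i + 1)) • m (z i))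
    (hxh : ∀ i, xh (i + 1) = grad (x (i + 1)))
    (k : ℕ) (hk : 1 ≤ k) :
    f (xh k) - f xstar ≤
      4 * L / σ * ((ψ xstar - ψ (x 0) - ⟪gψ (x 0), xstar - x 0⟫) /
        ((k + 1) * (k + 2))) :=
  stmt10_general X hXcvx f gf L hL hsmooth hconv ψ gψ σ hσ hstrong xstar hxstarX z x xh hx0X φ hφ m
    hmX hmmax grad hgradX hgradmin a A hA ha hz0 hxh0 hz hx hxh k
end

section
/- Let f: X → ℝ be L-smooth and σ-strongly convex with condition number κ = L/σ, ψ σ₀-strongly convex with σ₀ = L − σ, φ(·) = D_ψ(·, x^(0)), and φ_i(x) = Σ_{j=0}^i a_j (σ/2)‖x − x^(j)‖² + φ(x). Let the iteration be z^(i) = z^(i−1) − a_i∇f(x^(i)), x^(i) = (A^(i−1)/A^(i)) x̂^(i−1) + (a_i/A^(i)) ∇φ*_{i−1}(z^(i−1)), x̂^(i) = Grad(x^(i)), with a_0 = 1 and a_i/A^(i) = (√(4κ+1) − 1)/(2κ). Then f(x̂^(k)) − f(x*) ≤ (1 − (√(4κ+1) − 1)/(2κ))^k · D_ψ(x*, x^(0)).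 -/
/-!
Nesterov's estimate-sequence argument. Let `ℓ_j` be the quadratic minorant
`f(x_j) + ⟪∇f(x_j), · - x_j⟫ + σ/2 ‖· - x_j‖²` of `f` and `ζ_k = ∑_{j ≤ k} a_j ℓ_j + φ`.
Then `ζ_k` is `σ A_k`-strongly convex and, up to sign and a constant, equals `⟪z_k, ·⟫ - φ_k`,
so it is minimised over `X` at `v_k = ∇φ_k^*(z_k)`. By induction `A_k f(x̂_k) ≤ min_X ζ_k`:
quadratic growth of `ζ_k` around `v_k` pays for the `L τ²`-term of the gradient step from
`x_{k+1} = (1 - τ) x̂_k + τ v_k`, since `τ = a_{k+1}/A_{k+1}` solves `L τ² = σ (1 - τ)`.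
Evaluating at `x*` and using `ℓ_j ≤ f` gives `A_k (f(x̂_k) - f(x*)) ≤ φ(x*)`, and
`A_k = (1 - τ)^{-k}`.
-/

open scoped RealInnerProductSpace

open Finset Filter Topology

section StrongConvexity

variable {E : Type*} [NormedAddCommGroup E] [NormedSpace ℝ E] {s : Set E} {m n : ℝ}
  {f g : E → ℝ}

lemma StrongConvexOn.add (hf : StrongConvexOn s m f) (hg : StrongConvexOn s n g) :
    StrongConvexOn s (m + n) (f + g) :=
  (UniformConvexOn.add hf hg).mono fun r ↦ by simp only [Pi.add_apply]; linarith

lemma StrongConvexOn.const_mul (hf : StrongConvexOn s m f) {c : ℝ} (hc : 0 ≤ c) :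
    StrongConvexOn s (c * m) fun x ↦ c * f x := by
  refine ⟨hf.1, fun x hx y hy a b ha hb hab ↦ ?_⟩
  have h := mul_le_mul_of_nonneg_left (hf.2 hx hy ha hb hab) hc
  simp only [smul_eq_mul] at h ⊢
  linarith

lemma StrongConvexOn.sum {ι : Type*} {t : Finset ι} {m : ι → ℝ} {f : ι → E → ℝ}
    (hs : Convex ℝ s) (h : ∀ i ∈ t, StrongConvexOn s (m i) (f i)) :
    StrongConvexOn s (∑ i ∈ t, m i) fun x ↦ ∑ i ∈ t, f i x := by
  induction t using Finset.cons_induction with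
  | empty => simpa using convexOn_const (0 : ℝ) hs
  | cons i t hi ih =>
    simp only [sum_cons]
    exact (h i (mem_cons_self i t)).add (ih fun j hj ↦ h j (mem_cons_of_mem hj))

end StrongConvexity

section StrongConvexityInner

variable {E : Type*} [NormedAddCommGroup E] [InnerProductSpace ℝ E] {s : Set E} {m : ℝ}
  {f : E → ℝ}

lemma strongConvexOn_of_add_inner_le {g : E → E} (hs : Convex ℝ s)
    (h : ∀ x ∈ s, ∀ y ∈ s, f x + ⟪g x, y - x⟫ + m / 2 * ‖y - x‖ ^ 2 ≤ f y) :
    StrongConvexOn s m f := by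
  refine ⟨hs, fun x hx y hy a b ha hb hab ↦ ?_⟩
  set r := a • x + b • y
  have hr : r ∈ s := hs hx hy ha hb hab
  obtain rfl : b = 1 - a := eq_sub_of_add_eq' hab
  have hxr : x - r = (1 - a) • (x - y) := by simp only [r]; module
  have hyr : y - r = -(a • (x - y)) := by simp only [r]; module
  have hx' := h r hr x hx
  have hy' := h r hr y hy
  rw [hxr, inner_smul_right, norm_smul, Real.norm_of_nonneg hb] at hx'
  rw [hyr, inner_neg_right, inner_smul_right, norm_neg, norm_smul,
    Real.norm_of_nonneg ha] at hy'
  simp only [smul_eq_mul]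
  nlinarith [mul_le_mul_of_nonneg_left hx' ha, mul_le_mul_of_nonneg_left hy' hb]

lemma StrongConvexOn.add_sq_le_of_isMinOn (hf : StrongConvexOn s m f) {x y : E}
    (hmin : IsMinOn f s x) (hx : x ∈ s) (hy : y ∈ s) :
    f x + m / 2 * ‖y - x‖ ^ 2 ≤ f y := by
  have hlim : Tendsto (fun t : ℝ ↦ f x + (1 - t) * (m / 2 * ‖y - x‖ ^ 2)) (𝓝[>] 0)
      (𝓝 (f x + m / 2 * ‖y - x‖ ^ 2)) := by
    refine tendsto_nhdsWithin_of_tendsto_nhds (Continuous.tendsto' ?_ _ _ (by simp))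
    fun_prop
  refine le_of_tendsto hlim ?_
  filter_upwards [Ioc_mem_nhdsGT one_pos] with t ⟨ht0, ht1⟩
  -- minimality at `(1 - t) x + t y` and strong convexity give, after dividing by `t`,
  -- `f x + (1 - t) m / 2 ‖y - x‖² ≤ f y`; now let `t → 0⁺`
  have hconv := hf.2 hx hy (sub_nonneg.2 ht1) ht0.le (sub_add_cancel 1 t)
  have hle := isMinOn_iff.1 hmin _ (hf.1 hx hy (sub_nonneg.2 ht1) ht0.le (sub_add_cancel 1 t))
  rw [norm_sub_rev] at hconv
  simp only [smul_eq_mul] at hconv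
  nlinarith

end StrongConvexityInner

/-- The rate `τ` of the method for condition number `κ`: the positive root of `κ τ² + τ = 1`. -/
noncomputable def accelRate (κ : ℝ) : ℝ := (Real.sqrt (4 * κ + 1) - 1) / (2 * κ)

section accelRate

variable {κ : ℝ}

lemma accelRate_pos (hκ : 0 < κ) : 0 < accelRate κ := by
  refine div_pos (sub_pos.2 ?_) (by positivity)
  rw [Real.lt_sqrt zero_le_one]; linarith

lemma accelRate_lt_one (hκ : 0 < κ) : accelRate κ < 1 := by
  rw [accelRate, div_lt_one (by positivity), sub_lt_iff_lt_add,
    Real.sqrt_lt' (by positivity)]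
  nlinarith

lemma mul_accelRate_sq_add_accelRate (hκ : 0 < κ) : κ * accelRate κ ^ 2 + accelRate κ = 1 := by
  have hs := Real.sq_sqrt (by linarith : (0 : ℝ) ≤ 4 * κ + 1)
  rw [accelRate]
  field_simp
  ring_nf at hs ⊢
  linarith

end accelRate

lemma mul_accelRate_div_sq {L σ : ℝ} (hσ : 0 < σ) (hL : 0 < L) :
    L * accelRate (L / σ) ^ 2 = σ * (1 - accelRate (L / σ)) := by
  have hκ : σ * (L / σ) = L := mul_div_cancel₀ L hσ.ne'
  linear_combination σ * mul_accelRate_sq_add_accelRate (div_pos hL hσ) - accelRate (L / σ) ^ 2 * hκ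

section Weights

variable {a A : ℕ → ℝ} {τ : ℝ}

lemma pow_mul_eq_of_eq_mul_succ {c : ℝ} (h : ∀ i, A i = c * A (i + 1)) (k : ℕ) :
    c ^ k * A k = A 0 := by
  induction k with
  | zero => simp
  | succ k ih => rw [← ih, h k]; ring

lemma weights_of_div_eq (hA : ∀ i, A i = ∑ j ∈ range (i + 1), a j) (ha0 : a 0 = 1)
    (ha : ∀ i, 1 ≤ i → a i / A i = τ) (hτ : τ ≠ 0) :
    (∀ i, a (i + 1) = τ * A (i + 1)) ∧ (∀ i, A i = (1 - τ) * A (i + 1)) ∧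
      ∀ k, (1 - τ) ^ k * A k = 1 := by
  have haτ (i : ℕ) : a (i + 1) = τ * A (i + 1) := by
    have hA' : A (i + 1) ≠ 0 := by
      intro h0
      simpa [h0, eq_comm, hτ] using ha (i + 1) i.succ_pos
    rw [← ha (i + 1) i.succ_pos, div_mul_cancel₀ _ hA']
  have hArec (i : ℕ) : A i = (1 - τ) * A (i + 1) := by
    linarith [haτ i, hA (i + 1), sum_range_succ a (i + 1), hA i]
  refine ⟨haτ, hArec, fun k ↦ ?_⟩
  rw [pow_mul_eq_of_eq_mul_succ hArec, hA, sum_range_one, ha0]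

end Weights

section EstimateSequence

variable {E : Type*} [NormedAddCommGroup E] [InnerProductSpace ℝ E]

noncomputable def quadMinorant (f : E → ℝ) (g : E → E) (σ : ℝ) (y p : E) : ℝ :=
  f y + ⟪g y, p - y⟫ + σ / 2 * ‖p - y‖ ^ 2

noncomputable def estimateSeq (f : E → ℝ) (g : E → E) (σ : ℝ) (a : ℕ → ℝ) (x : ℕ → E) (φ : E → ℝ)
    (k : ℕ) (p : E) : ℝ :=
  ∑ j ∈ range (k + 1), a j * quadMinorant f g σ (x j) p + φ p

variable {X : Set E} {f φ : E → ℝ} {g : E → E} {σ : ℝ} {a : ℕ → ℝ} {x : ℕ → E}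

lemma strongConvexOn_quadMinorant (hX : Convex ℝ X) (y : E) :
    StrongConvexOn X σ (quadMinorant f g σ y) := by
  refine strongConvexOn_of_add_inner_le (g := fun p ↦ g y + σ • (p - y)) hX
    fun p _ q _ ↦ le_of_eq ?_
  have hq : q - y = (p - y) + (q - p) := by abel
  simp only [quadMinorant]
  rw [hq, norm_add_sq_real, inner_add_right, inner_add_left, real_inner_smul_left]
  ring

lemma estimateSeq_succ (k : ℕ) (p : E) :
    estimateSeq f g σ a x φ (k + 1) p =
      estimateSeq f g σ a x φ k p + a (k + 1) * quadMinorant f g σ (x (k + 1)) p := by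
  simp only [estimateSeq, sum_range_succ]
  ring

lemma strongConvexOn_estimateSeq (hX : Convex ℝ X) (ha : ∀ j, 0 ≤ a j) {μ : ℝ}
    (hφ : StrongConvexOn X μ φ) (k : ℕ) :
    StrongConvexOn X ((∑ j ∈ range (k + 1), a j) * σ + μ) (estimateSeq f g σ a x φ k) := by
  rw [sum_mul]
  exact (StrongConvexOn.sum hX fun j _ ↦
    (strongConvexOn_quadMinorant hX (x j)).const_mul (ha j)).add hφ

lemma estimateSeq_add_sq_le_of_isMinOn (hX : Convex ℝ X) (ha : ∀ j, 0 ≤ a j) {μ : ℝ}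
    (hμ : 0 ≤ μ) (hφ : StrongConvexOn X μ φ) {k : ℕ} {v p : E}
    (hmin : IsMinOn (estimateSeq f g σ a x φ k) X v) (hv : v ∈ X) (hp : p ∈ X) :
    estimateSeq f g σ a x φ k v + (∑ j ∈ range (k + 1), a j) * σ / 2 * ‖p - v‖ ^ 2 ≤
      estimateSeq f g σ a x φ k p :=
  ((strongConvexOn_estimateSeq hX ha hφ k).mono (le_add_of_nonneg_right hμ)).add_sq_le_of_isMinOn
    hmin hv hp

lemma estimateSeq_le (hf : ∀ p ∈ X, ∀ q ∈ X, f q ≥ f p + ⟪g p, q - p⟫ + σ / 2 * ‖q - p‖ ^ 2)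
    (ha : ∀ j, 0 ≤ a j) (hx : ∀ j, x j ∈ X) {p : E} (hp : p ∈ X) (k : ℕ) :
    estimateSeq f g σ a x φ k p ≤ (∑ j ∈ range (k + 1), a j) * f p + φ p := by
  rw [estimateSeq, sum_mul]
  exact add_le_add_left (sum_le_sum fun j _ ↦
    mul_le_mul_of_nonneg_left (hf (x j) (hx j) p hp) (ha j)) _

/-- `ζ_k = c_k - (⟪z_k, ·⟫ - φ_k)`, so the maximiser `∇φ_k^*(z_k)` of `⟪z_k, ·⟫ - φ_k`
minimises `ζ_k`. -/
lemma isMinOn_estimateSeq {k : ℕ} {z v : E} {φk : E → ℝ}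
    (hφk : ∀ p, φk p = ∑ j ∈ range (k + 1), a j * (σ / 2 * ‖p - x j‖ ^ 2) + φ p)
    (hz : z = -∑ j ∈ range (k + 1), a j • g (x j))
    (hmax : IsMaxOn (fun p ↦ ⟪z, p⟫ - φk p) X v) :
    IsMinOn (estimateSeq f g σ a x φ k) X v := by
  have h : estimateSeq f g σ a x φ k = fun p ↦
      ∑ j ∈ range (k + 1), a j * (f (x j) - ⟪g (x j), x j⟫) - (⟪z, p⟫ - φk p) := by
    ext p
    have hterm : ∀ j, a j * quadMinorant f g σ (x j) p = a j * (f (x j) - ⟪g (x j), x j⟫) +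
        ⟪a j • g (x j), p⟫ + a j * (σ / 2 * ‖p - x j‖ ^ 2) := fun j ↦ by
      rw [quadMinorant, inner_sub_right, real_inner_smul_left]; ring
    rw [estimateSeq, hφk, hz, inner_neg_left, sum_inner]
    simp only [hterm, sum_add_distrib]
    ring
  rw [h]
  exact isMinOn_const.sub hmax

end EstimateSequence

section AcceleratedMethod

variable {E : Type*} [NormedAddCommGroup E] [InnerProductSpace ℝ E] {X : Set E}
  {f φ : E → ℝ} {g : E → E} {L σ : ℝ}

lemma bregman_add_inner_add_sq_le {ψ : E → ℝ} {gψ : E → E} {μ : ℝ} {y : E}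
    (hψ : ∀ p ∈ X, ∀ q ∈ X, ψ q ≥ ψ p + ⟪gψ p, q - p⟫ + μ / 2 * ‖q - p‖ ^ 2)
    (hφ : ∀ p, φ p = ψ p - ψ y - ⟪gψ y, p - y⟫) :
    ∀ p ∈ X, ∀ q ∈ X, φ p + ⟪gψ p - gψ y, q - p⟫ + μ / 2 * ‖q - p‖ ^ 2 ≤ φ q := by
  intro p hp q hq
  have h := hψ p hp q hq
  rw [hφ, hφ, inner_sub_left, show q - y = (p - y) + (q - p) by abel, inner_add_right]
  linarith

lemma sq_le_bregman {ψ : E → ℝ} {gψ : E → E} {μ : ℝ} {y : E}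
    (hψ : ∀ p ∈ X, ∀ q ∈ X, ψ q ≥ ψ p + ⟪gψ p, q - p⟫ + μ / 2 * ‖q - p‖ ^ 2)
    (hφ : ∀ p, φ p = ψ p - ψ y - ⟪gψ y, p - y⟫) (hy : y ∈ X) {p : E} (hp : p ∈ X) :
    μ / 2 * ‖p - y‖ ^ 2 ≤ φ p := by
  simpa [hφ y] using bregman_add_inner_add_sq_le hψ hφ y hy p hp

lemma le_of_isMinOn_gradStep
    (hsmooth : ∀ p ∈ X, ∀ q ∈ X, f q ≤ f p + ⟪g p, q - p⟫ + L / 2 * ‖q - p‖ ^ 2)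
    {p y : E} (hp : p ∈ X) (hy : y ∈ X)
    (hmin : IsMinOn (fun u ↦ ⟪g p, u - p⟫ + L / 2 * ‖u - p‖ ^ 2) X y) :
    ∀ u ∈ X, f y ≤ f p + ⟪g p, u - p⟫ + L / 2 * ‖u - p‖ ^ 2 := by
  intro u hu
  have := isMinOn_iff.1 hmin u hu
  linarith [hsmooth p hp y hy]

lemma eq_neg_sum_of_eq_sub_smul {a : ℕ → ℝ} {z w : ℕ → E} (h0 : z 0 = -(a 0) • w 0)
    (h : ∀ i, z (i + 1) = z i - a (i + 1) • w (i + 1)) (k : ℕ) :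
    z k = -∑ j ∈ range (k + 1), a j • w j := by
  induction k with
  | zero => simp [h0]
  | succ k ih => rw [h, ih, sum_range_succ (n := k + 1)]; abel

/-- Test the gradient step at `u = (1 - τ) x̂ + τ p`: then `u - x' = τ (p - v)`, and
`L τ² A' = σ A` turns its quadratic term into `σ A / 2 ‖p - v‖²`. -/
lemma estimate_step (hX : Convex ℝ X) {τ A A' : ℝ} {xh v x' xh' p : E}
    (hτ0 : 0 ≤ τ) (hτ1 : τ ≤ 1) (hA' : 0 ≤ A') (hA : A = (1 - τ) * A')
    (hLτ : L * τ ^ 2 = σ * (1 - τ)) (hxh : xh ∈ X) (hp : p ∈ X)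
    (hx' : x' = (1 - τ) • xh + τ • v)
    (hdesc : ∀ u ∈ X, f xh' ≤ f x' + ⟪g x', u - x'⟫ + L / 2 * ‖u - x'‖ ^ 2)
    (hconv : f x' + ⟪g x', xh - x'⟫ ≤ f xh) :
    A' * f xh' ≤ A * f xh + σ * A / 2 * ‖p - v‖ ^ 2 + τ * A' * (f x' + ⟪g x', p - x'⟫) := by
  have hu := hdesc _ (hX hxh hp (sub_nonneg.2 hτ1) hτ0 (sub_add_cancel 1 τ))
  have hstep : (1 - τ) • xh + τ • p - x' = τ • (p - v) := by rw [hx']; module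
  have hsplit : τ • (p - v) = (1 - τ) • (xh - x') + τ • (p - x') := by rw [hx']; module
  have hinner : τ * ⟪g x', p - v⟫ = (1 - τ) * ⟪g x', xh - x'⟫ + τ * ⟪g x', p - x'⟫ := by
    rw [← inner_smul_right, hsplit, inner_add_right, inner_smul_right, inner_smul_right]
  rw [hstep, inner_smul_right, norm_smul, Real.norm_of_nonneg hτ0, mul_pow] at hu
  have hA0 : 0 ≤ A := hA ▸ mul_nonneg (sub_nonneg.2 hτ1) hA'
  calc A' * f xh' ≤ A' * (f x' + τ * ⟪g x', p - v⟫ + L / 2 * (τ ^ 2 * ‖p - v‖ ^ 2)) :=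
        mul_le_mul_of_nonneg_left hu hA'
    _ = A * (f x' + ⟪g x', xh - x'⟫) + σ * A / 2 * ‖p - v‖ ^ 2
          + τ * A' * (f x' + ⟪g x', p - x'⟫) := by
        rw [hA]; linear_combination A' * hinner + A' / 2 * ‖p - v‖ ^ 2 * hLτ
    _ ≤ _ := by gcongr

lemma le_estimateSeq_zero {a : ℕ → ℝ} {x : ℕ → E} {xh₀ : E} (ha0 : a 0 = 1)
    (hφ : ∀ p ∈ X, (L - σ) / 2 * ‖p - x 0‖ ^ 2 ≤ φ p)
    (hdesc : ∀ u ∈ X, f xh₀ ≤ f (x 0) + ⟪g (x 0), u - x 0⟫ + L / 2 * ‖u - x 0‖ ^ 2)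
    {p : E} (hp : p ∈ X) :
    f xh₀ ≤ estimateSeq f g σ a x φ 0 p := by
  simp only [estimateSeq, quadMinorant, zero_add, range_one, sum_singleton, ha0, one_mul]
  linarith [hφ p hp, hdesc p hp]

lemma mul_le_estimateSeq (hX : Convex ℝ X) {τ : ℝ} {a A : ℕ → ℝ} {x xh v : ℕ → E}
    (hτ0 : 0 ≤ τ) (hτ1 : τ ≤ 1) (hσ : 0 ≤ σ) (hLτ : L * τ ^ 2 = σ * (1 - τ))
    (hA : ∀ k, 0 ≤ A k) (haτ : ∀ k, a (k + 1) = τ * A (k + 1))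
    (hArec : ∀ k, A k = (1 - τ) * A (k + 1))
    (hf : ∀ p ∈ X, ∀ q ∈ X, f q ≥ f p + ⟪g p, q - p⟫ + σ / 2 * ‖q - p‖ ^ 2)
    (hxhX : ∀ k, xh k ∈ X) (hxX : ∀ k, x k ∈ X) (hvX : ∀ k, v k ∈ X)
    (hx : ∀ k, x (k + 1) = (1 - τ) • xh k + τ • v k)
    (hdesc : ∀ k, ∀ u ∈ X, f (xh (k + 1)) ≤
      f (x (k + 1)) + ⟪g (x (k + 1)), u - x (k + 1)⟫ + L / 2 * ‖u - x (k + 1)‖ ^ 2)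
    (hbase : ∀ p ∈ X, A 0 * f (xh 0) ≤ estimateSeq f g σ a x φ 0 p)
    (hgrowth : ∀ k, ∀ p ∈ X, estimateSeq f g σ a x φ k (v k) + A k * σ / 2 * ‖p - v k‖ ^ 2 ≤
      estimateSeq f g σ a x φ k p) :
    ∀ k, ∀ p ∈ X, A k * f (xh k) ≤ estimateSeq f g σ a x φ k p := by
  intro k
  induction k with
  | zero => exact hbase
  | succ k ih =>
    intro p hp
    have hconv : f (x (k + 1)) + ⟪g (x (k + 1)), xh k - x (k + 1)⟫ ≤ f (xh k) := by
      have := hf _ (hxX (k + 1)) _ (hxhX k)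
      have : 0 ≤ σ / 2 * ‖xh k - x (k + 1)‖ ^ 2 := by positivity
      linarith
    have hmodel : f (x (k + 1)) + ⟪g (x (k + 1)), p - x (k + 1)⟫ ≤
        quadMinorant f g σ (x (k + 1)) p := by
      have : 0 ≤ σ / 2 * ‖p - x (k + 1)‖ ^ 2 := by positivity
      unfold quadMinorant
      linarith
    have hstep := estimate_step hX hτ0 hτ1 (hA (k + 1)) (hArec k) hLτ (hxhX k) hp (hx k)
      (hdesc k) hconv
    rw [estimateSeq_succ, haτ]
    linarith [ih _ (hvX k), hgrowth k p hp, mul_le_mul_of_nonneg_left hmodel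
      (mul_nonneg hτ0 (hA (k + 1)))]

end AcceleratedMethod

theorem stmt12_general {n : ℕ} (X : Set (EuclideanSpace ℝ (Fin n)))
    (hXcvx : Convex ℝ X)
    (f : EuclideanSpace ℝ (Fin n) → ℝ)
    (gf : EuclideanSpace ℝ (Fin n) → EuclideanSpace ℝ (Fin n))
    (L σ : ℝ) (hσ : 0 < σ) (hσL : σ < L)
    (hsmooth : ∀ p ∈ X, ∀ q ∈ X,
      f q ≤ f p + ⟪gf p, q - p⟫ + L / 2 * ‖q - p‖ ^ 2)
    (hfstrong : ∀ p ∈ X, ∀ q ∈ X,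
      f q ≥ f p + ⟪gf p, q - p⟫ + σ / 2 * ‖q - p‖ ^ 2)
    (ψ : EuclideanSpace ℝ (Fin n) → ℝ)
    (gψ : EuclideanSpace ℝ (Fin n) → EuclideanSpace ℝ (Fin n))
    (hψstrong : ∀ p ∈ X, ∀ q ∈ X,
      ψ q ≥ ψ p + ⟪gψ p, q - p⟫ + (L - σ) / 2 * ‖q - p‖ ^ 2)
    (xstar : EuclideanSpace ℝ (Fin n)) (hxstarX : xstar ∈ X)
    (z x xh : ℕ → EuclideanSpace ℝ (Fin n))
    (hx0X : x 0 ∈ X)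
    (φ : EuclideanSpace ℝ (Fin n) → ℝ)
    (hφ : ∀ p, φ p = ψ p - ψ (x 0) - ⟪gψ (x 0), p - x 0⟫)
    (a A : ℕ → ℝ)
    (hA : ∀ i, A i = ∑ j ∈ Finset.range (i + 1), a j)
    (φi : ℕ → EuclideanSpace ℝ (Fin n) → ℝ)
    (hφi : ∀ i p, φi i p =
      (∑ j ∈ Finset.range (i + 1), a j * (σ / 2 * ‖p - x j‖ ^ 2)) + φ p)
    (m : ℕ → EuclideanSpace ℝ (Fin n) → EuclideanSpace ℝ (Fin n))
    (hmX : ∀ i w, m i w ∈ X)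
    (hmmax : ∀ i w, IsMaxOn (fun p => ⟪w, p⟫ - φi i p) X (m i w))
    (grad : EuclideanSpace ℝ (Fin n) → EuclideanSpace ℝ (Fin n))
    (hgradX : ∀ p, grad p ∈ X)
    (hgradmin : ∀ p, IsMinOn
      (fun u => ⟪gf p, u - p⟫ + L / 2 * ‖u - p‖ ^ 2) X (grad p))
    (ha0 : a 0 = 1)
    (ha : ∀ i : ℕ, 1 ≤ i →
      a i / A i = (Real.sqrt (4 * (L / σ) + 1) - 1) / (2 * (L / σ)))
    (hz0 : z 0 = -(a 0) • gf (x 0)) (hxh0 : xh 0 = grad (x 0))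
    (hz : ∀ i, z (i + 1) = z i - a (i + 1) • gf (x (i + 1)))
    (hx : ∀ i, x (i + 1) =
      (A i / A (i + 1)) • xh i + (a (i + 1) / A (i + 1)) • m i (z i))
    (hxh : ∀ i, xh (i + 1) = grad (x (i + 1))) :
    ∀ k : ℕ,
      f (xh k) - f xstar ≤
        (1 - (Real.sqrt (4 * (L / σ) + 1) - 1) / (2 * (L / σ))) ^ k *
          (ψ xstar - ψ (x 0) - ⟪gψ (x 0), xstar - x 0⟫) := by
  have hκ : 0 < L / σ := div_pos (hσ.trans hσL) hσ
  have hLτ := mul_accelRate_div_sq hσ (hσ.trans hσL)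
  change ∀ i, 1 ≤ i → a i / A i = accelRate (L / σ) at ha
  change ∀ k, f (xh k) - f xstar ≤ (1 - accelRate (L / σ)) ^ k * _
  set τ := accelRate (L / σ)
  have hτ0 : 0 < τ := accelRate_pos hκ
  have hτ1 : τ < 1 := accelRate_lt_one hκ
  obtain ⟨haτ, hArec, hpow⟩ := weights_of_div_eq hA ha0 ha hτ0.ne'
  have hApos (k : ℕ) : 0 < A k :=
    pos_of_mul_pos_right ((hpow k).symm ▸ one_pos) (pow_nonneg (sub_nonneg.2 hτ1.le) k)
  have ha_nonneg : ∀ j, 0 ≤ a j := by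
    rintro (_ | j)
    · exact ha0 ▸ zero_le_one
    · exact haτ j ▸ mul_nonneg hτ0.le (hApos _).le
  have hxstep (k : ℕ) : x (k + 1) = (1 - τ) • xh k + τ • m k (z k) := by
    rw [hx, haτ, hArec, mul_div_cancel_right₀ _ (hApos _).ne',
      mul_div_cancel_right₀ _ (hApos _).ne']
  have hxhX : ∀ k, xh k ∈ X := by rintro (_ | k) <;> simp only [hxh0, hxh, hgradX]
  have hxX : ∀ k, x k ∈ X := by
    rintro (_ | k)
    · exact hx0X
    · exact hxstep k ▸
        hXcvx (hxhX k) (hmX _ _) (sub_nonneg.2 hτ1.le) hτ0.le (sub_add_cancel 1 τ)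
  have hdesc {p} (hp : p ∈ X) := le_of_isMinOn_gradStep hsmooth hp (hgradX p) (hgradmin p)
  have hφconv := strongConvexOn_of_add_inner_le hXcvx (bregman_add_inner_add_sq_le hψstrong hφ)
  have key := mul_le_estimateSeq hXcvx hτ0.le hτ1.le hσ.le hLτ (fun k ↦ (hApos k).le) haτ hArec
    hfstrong hxhX hxX (fun k ↦ hmX k (z k)) hxstep (fun k ↦ hxh k ▸ hdesc (hxX _))
    (fun p hp ↦ by
      simpa [hxh0, show A 0 = 1 by simpa using hpow 0] using
        le_estimateSeq_zero ha0 (fun q hq ↦ sq_le_bregman hψstrong hφ hx0X hq) (hdesc hx0X) hp)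
    (fun k p hp ↦ hA k ▸ estimateSeq_add_sq_le_of_isMinOn hXcvx ha_nonneg (by linarith) hφconv
      (isMinOn_estimateSeq (hφi k) (eq_neg_sum_of_eq_sub_smul hz0 hz k) (hmmax k _)) (hmX _ _) hp)
  intro k
  have hupper := estimateSeq_le (φ := φ) hfstrong ha_nonneg hxX hxstarX k
  rw [← hA] at hupper
  calc f (xh k) - f xstar = (1 - τ) ^ k * (A k * (f (xh k) - f xstar)) := by
        rw [← mul_assoc, hpow, one_mul]
    _ ≤ (1 - τ) ^ k * φ xstar := by
        gcongr
        linarith [key k xstar hxstarX]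
    _ = _ := by rw [hφ]

/-- Linear convergence of the accelerated method for `L`-smooth `σ`-strongly convex
minimization (Theorem `thm:amd-sc-conv`): with `κ = L/σ`, `a_0 = 1`,
`a_i/A^(i) = (√(4κ+1) − 1)/(2κ)` for `i ≥ 1`,
`f(x̂^(k)) − f(x*) ≤ (1 − (√(4κ+1) − 1)/(2κ))^k D_ψ(x*, x^(0))`. -/
theorem stmt12 {n : ℕ} (X : Set (EuclideanSpace ℝ (Fin n)))
    (hXcl : IsClosed X) (hXcvx : Convex ℝ X)
    (f : EuclideanSpace ℝ (Fin n) → ℝ)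
    (gf : EuclideanSpace ℝ (Fin n) → EuclideanSpace ℝ (Fin n))
    (L σ : ℝ) (hσ : 0 < σ) (hσL : σ < L)
    (hsmooth : ∀ p ∈ X, ∀ q ∈ X,
      f q ≤ f p + ⟪gf p, q - p⟫ + L / 2 * ‖q - p‖ ^ 2)
    (hfstrong : ∀ p ∈ X, ∀ q ∈ X,
      f q ≥ f p + ⟪gf p, q - p⟫ + σ / 2 * ‖q - p‖ ^ 2)
    (ψ : EuclideanSpace ℝ (Fin n) → ℝ)
    (gψ : EuclideanSpace ℝ (Fin n) → EuclideanSpace ℝ (Fin n))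
    (hψstrong : ∀ p ∈ X, ∀ q ∈ X,
      ψ q ≥ ψ p + ⟪gψ p, q - p⟫ + (L - σ) / 2 * ‖q - p‖ ^ 2)
    (xstar : EuclideanSpace ℝ (Fin n)) (hxstarX : xstar ∈ X)
    (hxstarmin : ∀ y ∈ X, f xstar ≤ f y)
    (z x xh : ℕ → EuclideanSpace ℝ (Fin n))
    (hx0X : x 0 ∈ X)
    (φ : EuclideanSpace ℝ (Fin n) → ℝ)
    (hφ : ∀ p, φ p = ψ p - ψ (x 0) - ⟪gψ (x 0), p - x 0⟫)
    (a A : ℕ → ℝ)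
    (hA : ∀ i, A i = ∑ j ∈ Finset.range (i + 1), a j)
    (φi : ℕ → EuclideanSpace ℝ (Fin n) → ℝ)
    (hφi : ∀ i p, φi i p =
      (∑ j ∈ Finset.range (i + 1), a j * (σ / 2 * ‖p - x j‖ ^ 2)) + φ p)
    (m : ℕ → EuclideanSpace ℝ (Fin n) → EuclideanSpace ℝ (Fin n))
    (hmX : ∀ i w, m i w ∈ X)
    (hmmax : ∀ i w, IsMaxOn (fun p => ⟪w, p⟫ - φi i p) X (m i w))
    (grad : EuclideanSpace ℝ (Fin n) → EuclideanSpace ℝ (Fin n))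
    (hgradX : ∀ p, grad p ∈ X)
    (hgradmin : ∀ p, IsMinOn
      (fun u => ⟪gf p, u - p⟫ + L / 2 * ‖u - p‖ ^ 2) X (grad p))
    (ha0 : a 0 = 1)
    (ha : ∀ i : ℕ, 1 ≤ i →
      a i / A i = (Real.sqrt (4 * (L / σ) + 1) - 1) / (2 * (L / σ)))
    (hz0 : z 0 = -(a 0) • gf (x 0)) (hxh0 : xh 0 = grad (x 0))
    (hz : ∀ i, z (i + 1) = z i - a (i + 1) • gf (x (i + 1)))
    (hx : ∀ i, x (i + 1) =
      (A i / A (i + 1)) • xh i + (a (i + 1) / A (i + 1)) • m i (z i))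
    (hxh : ∀ i, xh (i + 1) = grad (x (i + 1))) :
    ∀ k : ℕ,
      f (xh k) - f xstar ≤
        (1 - (Real.sqrt (4 * (L / σ) + 1) - 1) / (2 * (L / σ))) ^ k *
          (ψ xstar - ψ (x 0) - ⟪gψ (x 0), xstar - x 0⟫) :=
  stmt12_general X hXcvx f gf L σ hσ hσL hsmooth hfstrong ψ gψ hψstrong xstar hxstarX z x xh hx0X φ
    hφ a A hA φi hφi m hmX hmmax grad hgradX hgradmin ha0 ha hz0 hxh0 hz hx hxh
end

section
/- For the discrete Frank-Wolfe method with ẑ^(i) = −∇f(x^(i)) and x^(i) = (A^(i−1)/A^(i)) x^(i−1) + (a_i/A^(i)) ∇ψ*(ẑ^(i−1)), the per-step discretization error satisfies E_d^(i) ≤ a_i ⟨∇f(x^(i)) − ∇f(x^(i−1)), ∇ψ*(ẑ^(i−1)) − ∇ψ*(ẑ^(i))⟩. -/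
open scoped RealInnerProductSpace

/-- Discretization-error bound for the discrete Frank-Wolfe method
(Proposition `prop:fw-discr-err`):
`E_d^(i) ≤ a_i ⟪∇f(x^(i)) − ∇f(x^(i−1)), ∇ψ*(ẑ^(i−1)) − ∇ψ*(ẑ^(i))⟫`, where
`E_d^(i) = A^(i−1)(f(x^(i)) − f(x^(i−1))) − a_i⟪∇f(x^(i)), ∇ψ*(ẑ^(i)) − x^(i)⟫
  + a_i(ψ(∇ψ*(ẑ^(i−1))) − ψ(∇ψ*(ẑ^(i))))`. -/
theorem stmt15 {n : ℕ} (X : Set (EuclideanSpace ℝ (Fin n)))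
    (hXcl : IsClosed X) (hXcvx : Convex ℝ X)
    (f ψ : EuclideanSpace ℝ (Fin n) → ℝ)
    (gf : EuclideanSpace ℝ (Fin n) → EuclideanSpace ℝ (Fin n))
    (hconv : ∀ p ∈ X, ∀ q ∈ X, f q ≥ f p + ⟪gf p, q - p⟫)
    (hψconv : ConvexOn ℝ X ψ)
    (mψ : EuclideanSpace ℝ (Fin n) → EuclideanSpace ℝ (Fin n))
    (hmX : ∀ w, mψ w ∈ X)
    (hmmin : ∀ w, IsMinOn (fun u => -⟪w, u⟫ + ψ u) X (mψ w))
    (a A : ℕ → ℝ) (hapos : ∀ i, 0 < a i)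
    (hA : ∀ i, A i = ∑ j ∈ Finset.range (i + 1), a j)
    (x zh : ℕ → EuclideanSpace ℝ (Fin n))
    (hx0X : x 0 ∈ X)
    (hzh : ∀ i, zh i = -gf (x i))
    (hx : ∀ i, x (i + 1) =
      (A i / A (i + 1)) • x i + (a (i + 1) / A (i + 1)) • mψ (zh i)) :
    ∀ i : ℕ,
      A i * (f (x (i + 1)) - f (x i)) -
          a (i + 1) * ⟪gf (x (i + 1)), mψ (zh (i + 1)) - x (i + 1)⟫ +
          a (i + 1) * (ψ (mψ (zh i)) - ψ (mψ (zh (i + 1)))) ≤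
        a (i + 1) * ⟪gf (x (i + 1)) - gf (x i), mψ (zh i) - mψ (zh (i + 1))⟫ := by
  have hApos : ∀ i, 0 < A i := by
    intro i
    rw [hA]
    exact Finset.sum_pos (fun j _ => hapos j) (Finset.nonempty_range_iff.mpr (Nat.succ_ne_zero i))
  have hAsucc : ∀ i, A (i + 1) = A i + a (i + 1) := by
    intro i
    rw [hA, hA, Finset.sum_range_succ]
  have hxX : ∀ i, x i ∈ X := by
    intro i
    induction i with
    | zero => exact hx0X
    | succ i ih =>
      rw [hx i]
      refine hXcvx ih (hmX _) (div_nonneg (hApos i).le (hApos (i+1)).le)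
        (div_nonneg (hapos (i+1)).le (hApos (i+1)).le) ?_
      have h := (hApos (i+1)).ne'
      field_simp
      linarith [hAsucc i]
  intro i
  have hne := (hApos (i+1)).ne'
  have hvec : A i • (x (i+1) - x i) = a (i+1) • (mψ (zh i) - x (i+1)) := by
    have h1 : A (i+1) • x (i+1) = A i • x i + a (i+1) • mψ (zh i) := by
      rw [hx i]
      match_scalars <;> field_simp
    rw [hAsucc i] at h1
    linear_combination (norm := module) h1
  have hinner : A i * ⟪gf (x (i+1)), x (i+1) - x i⟫ = a (i+1) * ⟪gf (x (i+1)), mψ (zh i) - x (i+1)⟫ := by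
    rw [← real_inner_smul_right, ← real_inner_smul_right, hvec]
  have hcv := hconv (x (i+1)) (hxX (i+1)) (x i) (hxX i)
  have hmin := isMinOn_iff.mp (hmmin (zh i)) _ (hmX (zh (i+1)))
  have hz : ∀ u : EuclideanSpace ℝ (Fin n), (⟪zh i, u⟫ : ℝ) = -⟪gf (x i), u⟫ := fun u => by
    rw [hzh i, inner_neg_left]
  simp only [hz] at hmin
  simp only [inner_neg_left, inner_sub_left, inner_sub_right] at hmin hcv hinner ⊢
  have h1 : A i * (f (x (i+1)) - f (x i)) ≤ a (i+1) * (⟪gf (x (i+1)), mψ (zh i)⟫ - ⟪gf (x (i+1)), x (i+1)⟫) := by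
    have := mul_le_mul_of_nonneg_left (by linarith [hcv] : f (x (i+1)) - f (x i) ≤ ⟪gf (x (i+1)), x (i+1)⟫ - ⟪gf (x (i+1)), x i⟫) (hApos i).le
    linarith [hinner]
  have h2 := mul_le_mul_of_nonneg_left (by linarith [hmin] :
      ψ (mψ (zh i)) - ψ (mψ (zh (i+1))) ≤ ⟪gf (x i), mψ (zh (i+1))⟫ - ⟪gf (x i), mψ (zh i)⟫)
    (hapos (i+1)).le
  nlinarith [h1, h2]
end
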